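/- arXiv:1701.04850 — 13 statements merged into one kernel-verified Lean document; each statement's English description precedes it below -/
import Mathlib

section
/- For every ν > 0 and every δ ∈ (√(2/3), √(3/2)), the real subspace is invariant for the center-manifold ODE model: if ω1, ω3, ω5, ω7 : [0,∞) → ℂ solve the system and Im ω1(0) = Im ω3(0) = Im ω5(0) = Im ω7(0) = 0, then Im ω1(t) = Im ω3(t) = Im ω5(t) = Im ω7(t) = 0 for all t ≥ 0. -/
/-!
The vector field of the model is a real polynomial map of `ℂ⁴` that commutes with complex
conjugation. Hence `t ↦ conj ω(t)` solves the same ODE as `ω`, with the same initial value when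
that value is real, and uniqueness of solutions of locally Lipschitz ODEs gives `conj ω = ω`.
-/

open Set

theorem eqOn_Icc_of_hasDerivAt_of_locallyLipschitz {E : Type*} [NormedAddCommGroup E]
    [NormedSpace ℝ E] {F : E → E} (hF : LocallyLipschitz F) {f g : ℝ → E} {a b : ℝ}
    (hf : ∀ t ∈ Icc a b, HasDerivAt f (F (f t)) t) (hg : ∀ t ∈ Icc a b, HasDerivAt g (F (g t)) t)
    (ha : f a = g a) : EqOn f g (Icc a b) := by
  have hfc : ContinuousOn f (Icc a b) := fun t ht => (hf t ht).continuousAt.continuousWithinAt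
  have hgc : ContinuousOn g (Icc a b) := fun t ht => (hg t ht).continuousAt.continuousWithinAt
  set s := f '' Icc a b ∪ g '' Icc a b
  obtain ⟨K, hK⟩ := hF.locallyLipschitzOn.exists_lipschitzOnWith_of_compact
    ((isCompact_Icc.image_of_continuousOn hfc).union (isCompact_Icc.image_of_continuousOn hgc))
  exact ODE_solution_unique_of_mem_Icc_right (s := fun _ => s) (fun _ _ => hK) hfc
    (fun t ht => (hf t (Ico_subset_Icc_self ht)).hasDerivWithinAt)
    (fun t ht => .inl (mem_image_of_mem f (Ico_subset_Icc_self ht))) hgc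
    (fun t ht => (hg t (Ico_subset_Icc_self ht)).hasDerivWithinAt)
    (fun t ht => .inr (mem_image_of_mem g (Ico_subset_Icc_self ht))) ha

theorem IsSelfAdjoint.of_hasDerivAt_of_map_star {E : Type*} [NormedAddCommGroup E]
    [NormedSpace ℝ E] [StarAddMonoid E] [StarModule ℝ E] [ContinuousStar E]
    {F : E → E} (hF : LocallyLipschitz F) (hF_star : ∀ z, F (star z) = star (F z))
    {W : ℝ → E} (hW : ∀ t, 0 ≤ t → HasDerivAt W (F (W t)) t) (h0 : IsSelfAdjoint (W 0))
    {t : ℝ} (ht : 0 ≤ t) : IsSelfAdjoint (W t) := by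
  have hW_star : ∀ τ, 0 ≤ τ → HasDerivAt (fun s => star (W s)) (F (star (W τ))) τ := by
    intro τ hτ
    rw [hF_star]
    exact (hW τ hτ).star
  exact eqOn_Icc_of_hasDerivAt_of_locallyLipschitz hF (fun τ hτ => hW_star τ hτ.1)
    (fun τ hτ => hW τ hτ.1) h0 ⟨ht, le_rfl⟩

-- `z = (ω1, ω3, ω5, ω7)`
noncomputable def centerManifoldField (ν δ : ℝ) (z : ℂ × ℂ × ℂ × ℂ) : ℂ × ℂ × ℂ × ℂ :=
  (-((ν / δ ^ 2 : ℝ) : ℂ) * z.1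
      + ((1 / (δ * (1 + δ ^ 2)) : ℝ) : ℂ) * (z.2.1 * z.2.2.2 - (starRingEnd ℂ) z.2.1 * z.2.2.1)
      + ((3 * δ ^ 6 / (2 * ν * (4 + δ ^ 2) * (1 + δ ^ 2) ^ 2) : ℝ) : ℂ) * z.1
          * ((‖z.2.2.1‖ ^ 2 + ‖z.2.2.2‖ ^ 2 : ℝ) : ℂ),
    -(ν : ℂ) * z.2.1
      + ((δ ^ 3 / (1 + δ ^ 2) : ℝ) : ℂ)
          * ((starRingEnd ℂ) z.1 * z.2.2.1 - z.1 * (starRingEnd ℂ) z.2.2.2)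
      + ((3 * δ ^ 2 / (2 * ν * (1 + 4 * δ ^ 2) * (1 + δ ^ 2) ^ 2) : ℝ) : ℂ) * z.2.1
          * ((‖z.2.2.1‖ ^ 2 + ‖z.2.2.2‖ ^ 2 : ℝ) : ℂ),
    -((ν * (1 + δ ^ 2) / δ ^ 2 : ℝ) : ℂ) * z.2.2.1
      - (((δ ^ 2 - 1) / δ : ℝ) : ℂ) * z.1 * z.2.1
      - ((δ ^ 6 * (3 + δ ^ 2) / (2 * ν * (4 + δ ^ 2) * (1 + δ ^ 2)) : ℝ) : ℂ) * z.2.2.1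
          * ((‖z.1‖ ^ 2 : ℝ) : ℂ)
      - (((1 + 3 * δ ^ 2) / (2 * ν * δ ^ 2 * (1 + 4 * δ ^ 2) * (1 + δ ^ 2)) : ℝ) : ℂ) * z.2.2.1
          * ((‖z.2.1‖ ^ 2 : ℝ) : ℂ),
    -((ν * (1 + δ ^ 2) / δ ^ 2 : ℝ) : ℂ) * z.2.2.2
      + (((δ ^ 2 - 1) / δ : ℝ) : ℂ) * z.1 * (starRingEnd ℂ) z.2.1
      - ((δ ^ 6 * (3 + δ ^ 2) / (2 * ν * (4 + δ ^ 2) * (1 + δ ^ 2)) : ℝ) : ℂ) * z.2.2.2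
          * ((‖z.1‖ ^ 2 : ℝ) : ℂ)
      - (((1 + 3 * δ ^ 2) / (2 * ν * δ ^ 2 * (1 + 4 * δ ^ 2) * (1 + δ ^ 2)) : ℝ) : ℂ) * z.2.2.2
          * ((‖z.2.1‖ ^ 2 : ℝ) : ℂ))

theorem centerManifoldField_star (ν δ : ℝ) (z : ℂ × ℂ × ℂ × ℂ) :
    centerManifoldField ν δ (star z) = star (centerManifoldField ν δ z) := by
  simp [centerManifoldField, Prod.ext_iff, Complex.conj_ofReal]

theorem contDiff_centerManifoldField (ν δ : ℝ) {n : WithTop ℕ∞} :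
    ContDiff ℝ n (centerManifoldField ν δ) := by
  have hconj : ContDiff ℝ n fun w : ℂ => (starRingEnd ℂ) w := Complex.conjCLE.contDiff
  unfold centerManifoldField
  -- `‖w‖ ^ 2 = w * conj w` turns every term into a product of coordinates and their conjugates
  simp only [Complex.ofReal_add, Complex.ofReal_pow, ← Complex.mul_conj']
  fun_prop

theorem isSelfAdjoint_complex_quadruple_iff (z1 z3 z5 z7 : ℂ) :
    IsSelfAdjoint (z1, z3, z5, z7) ↔ z1.im = 0 ∧ z3.im = 0 ∧ z5.im = 0 ∧ z7.im = 0 := by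
  simp only [IsSelfAdjoint, Prod.star_def, Prod.mk.injEq, Complex.star_def, Complex.conj_eq_iff_im]

theorem real_subspace_invariant_general
    (ν δ : ℝ)
    (ω1 ω3 ω5 ω7 : ℝ → ℂ)
    (h1 : ∀ t : ℝ, 0 ≤ t → HasDerivAt ω1
      (-((ν / δ ^ 2 : ℝ) : ℂ) * ω1 t
        + ((1 / (δ * (1 + δ ^ 2)) : ℝ) : ℂ) * (ω3 t * ω7 t - (starRingEnd ℂ) (ω3 t) * ω5 t)
        + ((3 * δ ^ 6 / (2 * ν * (4 + δ ^ 2) * (1 + δ ^ 2) ^ 2) : ℝ) : ℂ) * ω1 t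
            * ((‖ω5 t‖ ^ 2 + ‖ω7 t‖ ^ 2 : ℝ) : ℂ)) t)
    (h3 : ∀ t : ℝ, 0 ≤ t → HasDerivAt ω3
      (-(ν : ℂ) * ω3 t
        + ((δ ^ 3 / (1 + δ ^ 2) : ℝ) : ℂ) * ((starRingEnd ℂ) (ω1 t) * ω5 t - ω1 t * (starRingEnd ℂ) (ω7 t))
        + ((3 * δ ^ 2 / (2 * ν * (1 + 4 * δ ^ 2) * (1 + δ ^ 2) ^ 2) : ℝ) : ℂ) * ω3 t
            * ((‖ω5 t‖ ^ 2 + ‖ω7 t‖ ^ 2 : ℝ) : ℂ)) t)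
    (h5 : ∀ t : ℝ, 0 ≤ t → HasDerivAt ω5
      (-((ν * (1 + δ ^ 2) / δ ^ 2 : ℝ) : ℂ) * ω5 t
        - (((δ ^ 2 - 1) / δ : ℝ) : ℂ) * ω1 t * ω3 t
        - ((δ ^ 6 * (3 + δ ^ 2) / (2 * ν * (4 + δ ^ 2) * (1 + δ ^ 2)) : ℝ) : ℂ) * ω5 t
            * ((‖ω1 t‖ ^ 2 : ℝ) : ℂ)
        - (((1 + 3 * δ ^ 2) / (2 * ν * δ ^ 2 * (1 + 4 * δ ^ 2) * (1 + δ ^ 2)) : ℝ) : ℂ) * ω5 t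
            * ((‖ω3 t‖ ^ 2 : ℝ) : ℂ)) t)
    (h7 : ∀ t : ℝ, 0 ≤ t → HasDerivAt ω7
      (-((ν * (1 + δ ^ 2) / δ ^ 2 : ℝ) : ℂ) * ω7 t
        + (((δ ^ 2 - 1) / δ : ℝ) : ℂ) * ω1 t * (starRingEnd ℂ) (ω3 t)
        - ((δ ^ 6 * (3 + δ ^ 2) / (2 * ν * (4 + δ ^ 2) * (1 + δ ^ 2)) : ℝ) : ℂ) * ω7 t
            * ((‖ω1 t‖ ^ 2 : ℝ) : ℂ)
        - (((1 + 3 * δ ^ 2) / (2 * ν * δ ^ 2 * (1 + 4 * δ ^ 2) * (1 + δ ^ 2)) : ℝ) : ℂ) * ω7 t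
            * ((‖ω3 t‖ ^ 2 : ℝ) : ℂ)) t)
    (hinit : (ω1 0).im = 0 ∧ (ω3 0).im = 0 ∧ (ω5 0).im = 0 ∧ (ω7 0).im = 0) :
    ∀ t : ℝ, 0 ≤ t → (ω1 t).im = 0 ∧ (ω3 t).im = 0 ∧ (ω5 t).im = 0 ∧ (ω7 t).im = 0 := by
  intro t ht
  have hW : ∀ τ, 0 ≤ τ → HasDerivAt (fun s => (ω1 s, ω3 s, ω5 s, ω7 s))
      (centerManifoldField ν δ (ω1 τ, ω3 τ, ω5 τ, ω7 τ)) τ := fun τ hτ =>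
    (h1 τ hτ).prodMk ((h3 τ hτ).prodMk ((h5 τ hτ).prodMk (h7 τ hτ)))
  exact (isSelfAdjoint_complex_quadruple_iff _ _ _ _).1 <|
    ((isSelfAdjoint_complex_quadruple_iff _ _ _ _).2 hinit).of_hasDerivAt_of_map_star
      (contDiff_centerManifoldField ν δ).locallyLipschitz (centerManifoldField_star ν δ) hW ht

/-- For every ν > 0 and every δ ∈ (√(2/3), √(3/2)), the real subspace is invariant
for the center-manifold ODE model: if ω1, ω3, ω5, ω7 solve the system and have real initial
data, they stay real for all t ≥ 0. -/
theorem real_subspace_invariant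
    (ν δ : ℝ) (hν : 0 < ν)
    (hδ1 : Real.sqrt (2 / 3) < δ) (hδ2 : δ < Real.sqrt (3 / 2))
    (ω1 ω3 ω5 ω7 : ℝ → ℂ)
    (h1 : ∀ t : ℝ, 0 ≤ t → HasDerivAt ω1
      (-((ν / δ ^ 2 : ℝ) : ℂ) * ω1 t
        + ((1 / (δ * (1 + δ ^ 2)) : ℝ) : ℂ) * (ω3 t * ω7 t - (starRingEnd ℂ) (ω3 t) * ω5 t)
        + ((3 * δ ^ 6 / (2 * ν * (4 + δ ^ 2) * (1 + δ ^ 2) ^ 2) : ℝ) : ℂ) * ω1 t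
            * ((‖ω5 t‖ ^ 2 + ‖ω7 t‖ ^ 2 : ℝ) : ℂ)) t)
    (h3 : ∀ t : ℝ, 0 ≤ t → HasDerivAt ω3
      (-(ν : ℂ) * ω3 t
        + ((δ ^ 3 / (1 + δ ^ 2) : ℝ) : ℂ) * ((starRingEnd ℂ) (ω1 t) * ω5 t - ω1 t * (starRingEnd ℂ) (ω7 t))
        + ((3 * δ ^ 2 / (2 * ν * (1 + 4 * δ ^ 2) * (1 + δ ^ 2) ^ 2) : ℝ) : ℂ) * ω3 t
            * ((‖ω5 t‖ ^ 2 + ‖ω7 t‖ ^ 2 : ℝ) : ℂ)) t)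
    (h5 : ∀ t : ℝ, 0 ≤ t → HasDerivAt ω5
      (-((ν * (1 + δ ^ 2) / δ ^ 2 : ℝ) : ℂ) * ω5 t
        - (((δ ^ 2 - 1) / δ : ℝ) : ℂ) * ω1 t * ω3 t
        - ((δ ^ 6 * (3 + δ ^ 2) / (2 * ν * (4 + δ ^ 2) * (1 + δ ^ 2)) : ℝ) : ℂ) * ω5 t
            * ((‖ω1 t‖ ^ 2 : ℝ) : ℂ)
        - (((1 + 3 * δ ^ 2) / (2 * ν * δ ^ 2 * (1 + 4 * δ ^ 2) * (1 + δ ^ 2)) : ℝ) : ℂ) * ω5 t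
            * ((‖ω3 t‖ ^ 2 : ℝ) : ℂ)) t)
    (h7 : ∀ t : ℝ, 0 ≤ t → HasDerivAt ω7
      (-((ν * (1 + δ ^ 2) / δ ^ 2 : ℝ) : ℂ) * ω7 t
        + (((δ ^ 2 - 1) / δ : ℝ) : ℂ) * ω1 t * (starRingEnd ℂ) (ω3 t)
        - ((δ ^ 6 * (3 + δ ^ 2) / (2 * ν * (4 + δ ^ 2) * (1 + δ ^ 2)) : ℝ) : ℂ) * ω7 t
            * ((‖ω1 t‖ ^ 2 : ℝ) : ℂ)
        - (((1 + 3 * δ ^ 2) / (2 * ν * δ ^ 2 * (1 + 4 * δ ^ 2) * (1 + δ ^ 2)) : ℝ) : ℂ) * ω7 t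
            * ((‖ω3 t‖ ^ 2 : ℝ) : ℂ)) t)
    (hinit : (ω1 0).im = 0 ∧ (ω3 0).im = 0 ∧ (ω5 0).im = 0 ∧ (ω7 0).im = 0) :
    ∀ t : ℝ, 0 ≤ t → (ω1 t).im = 0 ∧ (ω3 t).im = 0 ∧ (ω5 t).im = 0 ∧ (ω7 t).im = 0 :=
  real_subspace_invariant_general ν δ ω1 ω3 ω5 ω7 h1 h3 h5 h7 hinit
end

section
/- If ω1, ω3, ω5, ω7 solve the symmetric (δ = 1) center-manifold system, then A(t) = |ω1(t)|² + |ω3(t)|² and B(t) = |ω5(t)|² + |ω7(t)|² are differentiable and satisfy the closed two-dimensional system A'(t) = −2ν A(t) + (3/(20ν)) A(t) B(t) and B'(t) = −4ν B(t) − (2/(5ν)) A(t) B(t). -/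
/-!
Since `d/dt ‖ω‖² = 2 ⟪ω, ω'⟫`, each equation of the form `ω' = r ω + g` with `r` real contributes
`2 r ‖ω‖² + 2 ⟪ω, g⟫`. The cubic terms are of this radial form, and the quadratic coupling terms
of `ω1'` and `ω3'` only exchange energy between `ω1` and `ω3`: their contributions cancel in `A'`.
Hence `A` and `B` obey a closed system.
-/

open ComplexConjugate RealInnerProductSpace

theorem HasDerivAt.norm_sq_of_smul_add {F : Type*} [NormedAddCommGroup F] [InnerProductSpace ℝ F]
    {f : ℝ → F} {r t : ℝ} {g : F} (hf : HasDerivAt f (r • f t + g) t) :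
    HasDerivAt (‖f ·‖ ^ 2) (2 * r * ‖f t‖ ^ 2 + 2 * ⟪f t, g⟫) t := by
  convert hf.norm_sq using 1
  rw [inner_add_right, real_inner_smul_right, real_inner_self_eq_norm_sq]
  ring

theorem Complex.inner_coupling_add_inner_coupling_eq_zero (a b c d : ℂ) :
    ⟪a, 1 / 2 * (b * d - conj b * c)⟫ + ⟪b, 1 / 2 * (conj a * c - a * conj d)⟫ = 0 := by
  simp only [Complex.inner, Complex.mul_re, Complex.mul_im, Complex.sub_re, Complex.sub_im,
    Complex.conj_re, Complex.conj_im, Complex.div_re, Complex.div_im,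
    Complex.one_re, Complex.one_im, Complex.re_ofNat, Complex.im_ofNat]
  ring

theorem AB_closed_system_general
    (ν : ℝ)
    (ω1 ω3 ω5 ω7 : ℝ → ℂ)
    (h1 : ∀ t : ℝ, 0 ≤ t → HasDerivAt ω1
      (-(ν : ℂ) * ω1 t + (1 / 2 : ℂ) * (ω3 t * ω7 t - (starRingEnd ℂ) (ω3 t) * ω5 t)
        + ((3 / (40 * ν) : ℝ) : ℂ) * ω1 t
            * ((‖ω5 t‖ ^ 2 + ‖ω7 t‖ ^ 2 : ℝ) : ℂ)) t)
    (h3 : ∀ t : ℝ, 0 ≤ t → HasDerivAt ω3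
      (-(ν : ℂ) * ω3 t + (1 / 2 : ℂ) * ((starRingEnd ℂ) (ω1 t) * ω5 t - ω1 t * (starRingEnd ℂ) (ω7 t))
        + ((3 / (40 * ν) : ℝ) : ℂ) * ω3 t
            * ((‖ω5 t‖ ^ 2 + ‖ω7 t‖ ^ 2 : ℝ) : ℂ)) t)
    (h5 : ∀ t : ℝ, 0 ≤ t → HasDerivAt ω5
      (-((2 * ν : ℝ) : ℂ) * ω5 t - ((1 / (5 * ν) : ℝ) : ℂ) * ω5 t
          * ((‖ω1 t‖ ^ 2 + ‖ω3 t‖ ^ 2 : ℝ) : ℂ)) t)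
    (h7 : ∀ t : ℝ, 0 ≤ t → HasDerivAt ω7
      (-((2 * ν : ℝ) : ℂ) * ω7 t - ((1 / (5 * ν) : ℝ) : ℂ) * ω7 t
          * ((‖ω1 t‖ ^ 2 + ‖ω3 t‖ ^ 2 : ℝ) : ℂ)) t) :
    ∀ t : ℝ, 0 ≤ t →
      HasDerivAt (fun s => ‖ω1 s‖ ^ 2 + ‖ω3 s‖ ^ 2)
        (-2 * ν * (‖ω1 t‖ ^ 2 + ‖ω3 t‖ ^ 2)
          + 3 / (20 * ν) * (‖ω1 t‖ ^ 2 + ‖ω3 t‖ ^ 2)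
              * (‖ω5 t‖ ^ 2 + ‖ω7 t‖ ^ 2)) t
      ∧ HasDerivAt (fun s => ‖ω5 s‖ ^ 2 + ‖ω7 s‖ ^ 2)
        (-4 * ν * (‖ω5 t‖ ^ 2 + ‖ω7 t‖ ^ 2)
          - 2 / (5 * ν) * (‖ω1 t‖ ^ 2 + ‖ω3 t‖ ^ 2)
              * (‖ω5 t‖ ^ 2 + ‖ω7 t‖ ^ 2)) t := by
  intro t ht
  have d1 := HasDerivAt.norm_sq_of_smul_add (r := -ν + 3 / (40 * ν) * (‖ω5 t‖ ^ 2 + ‖ω7 t‖ ^ 2))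
    (g := 1 / 2 * (ω3 t * ω7 t - conj (ω3 t) * ω5 t))
    ((h1 t ht).congr_deriv (by rw [Complex.real_smul]; push_cast; ring))
  have d3 := HasDerivAt.norm_sq_of_smul_add (r := -ν + 3 / (40 * ν) * (‖ω5 t‖ ^ 2 + ‖ω7 t‖ ^ 2))
    (g := 1 / 2 * (conj (ω1 t) * ω5 t - ω1 t * conj (ω7 t)))
    ((h3 t ht).congr_deriv (by rw [Complex.real_smul]; push_cast; ring))
  have d5 := HasDerivAt.norm_sq_of_smul_add (r := -2 * ν - 1 / (5 * ν) * (‖ω1 t‖ ^ 2 + ‖ω3 t‖ ^ 2))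
    (g := 0) ((h5 t ht).congr_deriv (by rw [Complex.real_smul]; push_cast; ring))
  have d7 := HasDerivAt.norm_sq_of_smul_add (r := -2 * ν - 1 / (5 * ν) * (‖ω1 t‖ ^ 2 + ‖ω3 t‖ ^ 2))
    (g := 0) ((h7 t ht).congr_deriv (by rw [Complex.real_smul]; push_cast; ring))
  refine ⟨(d1.add d3).congr_deriv ?_, (d5.add d7).congr_deriv ?_⟩
  · linear_combination 2 * Complex.inner_coupling_add_inner_coupling_eq_zero (ω1 t) (ω3 t) (ω5 t) (ω7 t)
  · rw [inner_zero_right, inner_zero_right]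
    ring

/-- For the symmetric (δ = 1) center-manifold system,
A(t) = |ω1(t)|² + |ω3(t)|² and B(t) = |ω5(t)|² + |ω7(t)|² are differentiable and satisfy
A' = −2νA + (3/(20ν))AB and B' = −4νB − (2/(5ν))AB. -/
theorem AB_closed_system
    (ν : ℝ) (hν : 0 < ν)
    (ω1 ω3 ω5 ω7 : ℝ → ℂ)
    (h1 : ∀ t : ℝ, 0 ≤ t → HasDerivAt ω1
      (-(ν : ℂ) * ω1 t + (1 / 2 : ℂ) * (ω3 t * ω7 t - (starRingEnd ℂ) (ω3 t) * ω5 t)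
        + ((3 / (40 * ν) : ℝ) : ℂ) * ω1 t
            * ((‖ω5 t‖ ^ 2 + ‖ω7 t‖ ^ 2 : ℝ) : ℂ)) t)
    (h3 : ∀ t : ℝ, 0 ≤ t → HasDerivAt ω3
      (-(ν : ℂ) * ω3 t + (1 / 2 : ℂ) * ((starRingEnd ℂ) (ω1 t) * ω5 t - ω1 t * (starRingEnd ℂ) (ω7 t))
        + ((3 / (40 * ν) : ℝ) : ℂ) * ω3 t
            * ((‖ω5 t‖ ^ 2 + ‖ω7 t‖ ^ 2 : ℝ) : ℂ)) t)
    (h5 : ∀ t : ℝ, 0 ≤ t → HasDerivAt ω5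
      (-((2 * ν : ℝ) : ℂ) * ω5 t - ((1 / (5 * ν) : ℝ) : ℂ) * ω5 t
          * ((‖ω1 t‖ ^ 2 + ‖ω3 t‖ ^ 2 : ℝ) : ℂ)) t)
    (h7 : ∀ t : ℝ, 0 ≤ t → HasDerivAt ω7
      (-((2 * ν : ℝ) : ℂ) * ω7 t - ((1 / (5 * ν) : ℝ) : ℂ) * ω7 t
          * ((‖ω1 t‖ ^ 2 + ‖ω3 t‖ ^ 2 : ℝ) : ℂ)) t) :
    ∀ t : ℝ, 0 ≤ t →
      HasDerivAt (fun s => ‖ω1 s‖ ^ 2 + ‖ω3 s‖ ^ 2)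
        (-2 * ν * (‖ω1 t‖ ^ 2 + ‖ω3 t‖ ^ 2)
          + 3 / (20 * ν) * (‖ω1 t‖ ^ 2 + ‖ω3 t‖ ^ 2)
              * (‖ω5 t‖ ^ 2 + ‖ω7 t‖ ^ 2)) t
      ∧ HasDerivAt (fun s => ‖ω5 s‖ ^ 2 + ‖ω7 s‖ ^ 2)
        (-4 * ν * (‖ω5 t‖ ^ 2 + ‖ω7 t‖ ^ 2)
          - 2 / (5 * ν) * (‖ω1 t‖ ^ 2 + ‖ω3 t‖ ^ 2)
              * (‖ω5 t‖ ^ 2 + ‖ω7 t‖ ^ 2)) t :=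
  AB_closed_system_general ν ω1 ω3 ω5 ω7 h1 h3 h5 h7
end

section
/- Let A, B : [0,∞) → ℝ be nonnegative differentiable functions satisfying A' = −2νA + (3/(20ν))AB and B' = −4νB − (2/(5ν))AB, with A(0) = A0 and B(0) = B0. Then A(t) + B(t) ≤ (A0 + B0) e^{−2νt} for all t ≥ 0. -/
/-- For nonnegative differentiable A, B solving the planar system
A' = −2νA + (3/(20ν))AB, B' = −4νB − (2/(5ν))AB, one has
A(t) + B(t) ≤ (A0 + B0) e^{−2νt} for all t ≥ 0. -/
theorem sum_decay
    (ν A0 B0 : ℝ) (hν : 0 < ν)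
    (A B : ℝ → ℝ)
    (hApos : ∀ t : ℝ, 0 ≤ t → 0 ≤ A t)
    (hBpos : ∀ t : ℝ, 0 ≤ t → 0 ≤ B t)
    (hA : ∀ t : ℝ, 0 ≤ t → HasDerivAt A (-2 * ν * A t + 3 / (20 * ν) * A t * B t) t)
    (hB : ∀ t : ℝ, 0 ≤ t → HasDerivAt B (-4 * ν * B t - 2 / (5 * ν) * A t * B t) t)
    (hA0 : A 0 = A0) (hB0 : B 0 = B0) :
    ∀ t : ℝ, 0 ≤ t → A t + B t ≤ (A0 + B0) * Real.exp (-2 * ν * t) := by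
  set f : ℝ → ℝ := fun t => (A t + B t) * Real.exp (2 * ν * t) with hf
  have hderiv : ∀ t : ℝ, 0 ≤ t → HasDerivAt f
      (((-2 * ν * A t + 3 / (20 * ν) * A t * B t) +
        (-4 * ν * B t - 2 / (5 * ν) * A t * B t)) * Real.exp (2 * ν * t)
        + (A t + B t) * (2 * ν * Real.exp (2 * ν * t))) t := by
    intro t ht
    have hexp : HasDerivAt (fun x : ℝ => Real.exp (2 * ν * x))
        (2 * ν * Real.exp (2 * ν * t)) t := by
      have h1 : HasDerivAt (fun x : ℝ => 2 * ν * x) (2 * ν) t := by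
        simpa using (hasDerivAt_id t).const_mul (2 * ν)
      have h2 : HasDerivAt (fun x : ℝ => Real.exp (2 * ν * x))
          (Real.exp (2 * ν * t) * (2 * ν)) t :=
        (Real.hasDerivAt_exp (2 * ν * t)).comp t h1
      convert h2 using 1
      ring
    exact ((hA t ht).add (hB t ht)).mul hexp
  have hmono : AntitoneOn f (Set.Ici (0 : ℝ)) := by
    apply antitoneOn_of_deriv_nonpos (convex_Ici 0)
    · intro t ht
      exact ((hderiv t ht).continuousAt).continuousWithinAt
    · intro t ht
      rw [interior_Ici] at ht
      exact ((hderiv t (le_of_lt ht)).differentiableAt).differentiableWithinAt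
    · intro t ht
      rw [interior_Ici] at ht
      have ht' : (0:ℝ) ≤ t := le_of_lt ht
      rw [(hderiv t ht').deriv]
      have hAt := hApos t ht'
      have hBt := hBpos t ht'
      have key : (-2 * ν * A t + 3 / (20 * ν) * A t * B t) +
          (-4 * ν * B t - 2 / (5 * ν) * A t * B t) + (A t + B t) * (2 * ν)
          = -(2 * ν * B t) - (1 / (4 * ν)) * (A t * B t) := by
        field_simp
        ring
      have hle : (-2 * ν * A t + 3 / (20 * ν) * A t * B t) +
          (-4 * ν * B t - 2 / (5 * ν) * A t * B t) + (A t + B t) * (2 * ν) ≤ 0 := by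
        rw [key]
        have h1 : 0 ≤ 2 * ν * B t := by positivity
        have h2 : 0 ≤ (1 / (4 * ν)) * (A t * B t) := by positivity
        linarith
      have hexp_pos : 0 < Real.exp (2 * ν * t) := Real.exp_pos _
      nlinarith [hexp_pos, hle]
  intro t ht
  have := hmono (Set.self_mem_Ici) ht ht
  have hf0 : f 0 = A0 + B0 := by simp [hf, hA0, hB0]
  have hft : f t ≤ A0 + B0 := hf0 ▸ this
  have hexp_pos : 0 < Real.exp (2 * ν * t) := Real.exp_pos _
  have : A t + B t ≤ (A0 + B0) / Real.exp (2 * ν * t) := by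
    rw [le_div_iff₀ hexp_pos]; exact hft
  calc A t + B t ≤ (A0 + B0) / Real.exp (2 * ν * t) := this
    _ = (A0 + B0) * Real.exp (-2 * ν * t) := by
        rw [div_eq_mul_inv, ← Real.exp_neg]; ring_nf
end

section
/- Let A, B : [0,∞) → ℝ be nonnegative differentiable functions satisfying A' = −2νA + (3/(20ν))AB and B' = −4νB − (2/(5ν))AB, with A(0) = A0 and B(0) = B0. Then for all 0 ≤ t ≤ 1/ν one has B(t) ≤ B0 e^{−(2A0/(5ν e²)) t}, i.e. the high modes decay at the rapid rate O(e^{−t/ν}) during this initial transient period. -/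
lemma mono_of_derivAux (a b : ℝ) (f f' : ℝ → ℝ)
    (hd : ∀ s ∈ Set.Icc a b, HasDerivAt f (f' s) s)
    (hnn : ∀ s ∈ Set.Ioo a b, 0 ≤ f' s) : MonotoneOn f (Set.Icc a b) := by
  apply monotoneOn_of_deriv_nonneg (convex_Icc a b)
  · exact fun s hs => (hd s hs).continuousAt.continuousWithinAt
  · intro s hs
    rw [interior_Icc] at hs
    exact (hd s (Set.mem_Icc_of_Ioo hs)).differentiableAt.differentiableWithinAt
  · intro s hs
    rw [interior_Icc] at hs
    rw [(hd s (Set.mem_Icc_of_Ioo hs)).deriv]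
    exact hnn s hs

lemma anti_of_derivAux (a b : ℝ) (f f' : ℝ → ℝ)
    (hd : ∀ s ∈ Set.Icc a b, HasDerivAt f (f' s) s)
    (hnp : ∀ s ∈ Set.Ioo a b, f' s ≤ 0) : AntitoneOn f (Set.Icc a b) := by
  apply antitoneOn_of_deriv_nonpos (convex_Icc a b)
  · exact fun s hs => (hd s hs).continuousAt.continuousWithinAt
  · intro s hs
    rw [interior_Icc] at hs
    exact (hd s (Set.mem_Icc_of_Ioo hs)).differentiableAt.differentiableWithinAt
  · intro s hs
    rw [interior_Icc] at hs
    rw [(hd s (Set.mem_Icc_of_Ioo hs)).deriv]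
    exact hnp s hs

/-- For nonnegative differentiable A, B solving the planar system
A' = −2νA + (3/(20ν))AB, B' = −4νB − (2/(5ν))AB, for all 0 ≤ t ≤ 1/ν one has
B(t) ≤ B0 e^{−(2A0/(5νe²))t}. -/
theorem B_rapid_decay_transient
    (ν A0 B0 : ℝ) (hν : 0 < ν)
    (A B : ℝ → ℝ)
    (hApos : ∀ t : ℝ, 0 ≤ t → 0 ≤ A t)
    (hBpos : ∀ t : ℝ, 0 ≤ t → 0 ≤ B t)
    (hA : ∀ t : ℝ, 0 ≤ t → HasDerivAt A (-2 * ν * A t + 3 / (20 * ν) * A t * B t) t)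
    (hB : ∀ t : ℝ, 0 ≤ t → HasDerivAt B (-4 * ν * B t - 2 / (5 * ν) * A t * B t) t)
    (hA0 : A 0 = A0) (hB0 : B 0 = B0) :
    ∀ t : ℝ, 0 ≤ t → t ≤ 1 / ν →
      B t ≤ B0 * Real.exp (-(2 * A0 / (5 * ν * Real.exp 2)) * t) := by
  intro t ht ht1
  set c : ℝ := 2 * A0 / (5 * ν * Real.exp 2) with hc
  have hA0nn : 0 ≤ A0 := hA0 ▸ hApos 0 le_rfl
  have he2 : (0:ℝ) < Real.exp 2 := Real.exp_pos 2
  -- Step 1: lower bound for A on [0,t]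
  have key1 : ∀ s, 0 ≤ s → A0 ≤ A s * Real.exp (2 * ν * s) := by
    intro s hs
    have hmono : MonotoneOn (fun u => A u * Real.exp (2 * ν * u)) (Set.Icc 0 s) := by
      apply mono_of_derivAux 0 s _
        (fun u => (-2 * ν * A u + 3 / (20 * ν) * A u * B u) * Real.exp (2 * ν * u)
          + A u * (Real.exp (2 * ν * u) * (2 * ν * 1)))
      · intro u hu
        exact (hA u hu.1).mul (((hasDerivAt_id u).const_mul (2 * ν)).exp)
      · intro u hu
        have hu0 : 0 ≤ u := le_of_lt hu.1
        have hAu := hApos u hu0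
        have hBu := hBpos u hu0
        have hex : 0 < Real.exp (2 * ν * u) := Real.exp_pos _
        have h1 : (0:ℝ) ≤ 3 / (20 * ν) * A u * B u := by positivity
        have : (-2 * ν * A u + 3 / (20 * ν) * A u * B u) * Real.exp (2 * ν * u)
            + A u * (Real.exp (2 * ν * u) * (2 * ν * 1))
            = (3 / (20 * ν) * A u * B u) * Real.exp (2 * ν * u) := by ring
        rw [this]
        positivity
    have := hmono (Set.left_mem_Icc.2 hs) (Set.right_mem_Icc.2 hs) hs
    simpa [hA0] using this
  -- hence A0 ≤ A u * e² for u ∈ [0,t]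
  have key1' : ∀ u, 0 ≤ u → u ≤ t → A0 ≤ A u * Real.exp 2 := by
    intro u hu hut
    have h1 : 2 * ν * u ≤ 2 := by
      have : u ≤ 1 / ν := le_trans hut ht1
      calc 2 * ν * u ≤ 2 * ν * (1 / ν) := by
            have := mul_le_mul_of_nonneg_left this (by positivity : (0:ℝ) ≤ 2 * ν)
            linarith
        _ = 2 := by field_simp
    have h2 : Real.exp (2 * ν * u) ≤ Real.exp 2 := Real.exp_le_exp.2 h1
    have h3 := key1 u hu
    have hAu := hApos u hu
    nlinarith [Real.exp_pos (2 * ν * u)]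
  -- Step 2: B u * exp(c u) is antitone on [0,t]
  have hanti : AntitoneOn (fun u => B u * Real.exp (c * u)) (Set.Icc 0 t) := by
    apply anti_of_derivAux 0 t _
      (fun u => (-4 * ν * B u - 2 / (5 * ν) * A u * B u) * Real.exp (c * u)
        + B u * (Real.exp (c * u) * (c * 1)))
    · intro u hu
      exact (hB u hu.1).mul (((hasDerivAt_id u).const_mul c).exp)
    · intro u hu
      have hu0 : 0 ≤ u := le_of_lt hu.1
      have hBu := hBpos u hu0
      have hAu := hApos u hu0
      have hex : 0 < Real.exp (c * u) := Real.exp_pos _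
      have hA2 : A0 ≤ A u * Real.exp 2 := key1' u hu0 (le_of_lt hu.2)
      -- show  c * B u ≤ 2/(5ν) * A u * B u + 4ν B u
      have hcB : c * B u ≤ 2 / (5 * ν) * (A u * B u) := by
        have h5 : (0:ℝ) < 5 * ν * Real.exp 2 := by positivity
        rw [hc, div_mul_eq_mul_div, div_le_iff₀ h5]
        have := mul_le_mul_of_nonneg_left hA2 hBu
        calc 2 * A0 * B u ≤ 2 * (A u * Real.exp 2) * B u := by nlinarith
          _ = 2 / (5 * ν) * (A u * B u) * (5 * ν * Real.exp 2) := by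
              field_simp
      have hin : (-4 * ν * B u - 2 / (5 * ν) * A u * B u) + B u * (c * 1) ≤ 0 := by
        nlinarith
      have : (-4 * ν * B u - 2 / (5 * ν) * A u * B u) * Real.exp (c * u)
          + B u * (Real.exp (c * u) * (c * 1))
          = ((-4 * ν * B u - 2 / (5 * ν) * A u * B u) + B u * (c * 1)) * Real.exp (c * u) := by
        ring
      rw [this]
      exact mul_nonpos_of_nonpos_of_nonneg hin (le_of_lt hex)
  have hfin := hanti (Set.left_mem_Icc.2 ht) (Set.right_mem_Icc.2 ht) ht
  simp only [mul_zero, Real.exp_zero, mul_one, hB0] at hfin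
  have hexp : 0 < Real.exp (c * t) := Real.exp_pos _
  have hfin2 : B t ≤ B0 / Real.exp (c * t) := (le_div_iff₀ hexp).2 hfin
  calc B t ≤ B0 / Real.exp (c * t) := hfin2
    _ = B0 * Real.exp (-c * t) := by rw [neg_mul, Real.exp_neg]; ring
end

section
/- Let A, B : [0,∞) → ℝ be nonnegative differentiable functions satisfying A' = −2νA + (3/(20ν))AB and B' = −4νB − (2/(5ν))AB, with A(0) = A0 and B(0) = B0. Then B is monotonically nonincreasing on [0,∞), and for all t ≥ 1/ν one has B(t) ≤ B0 e^{−2A0/(5ν² e²)}. -/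
/-!
Both nonlinear terms have a favourable sign, so they can be dropped in turn. Dropping the
AB-terms shows B' ≤ 0 and A' ≥ -2νA, hence A ≥ A0 e^{-2} on [0, 1/ν] by Grönwall. Feeding this
lower bound into the B equation and dropping -4νB gives B' ≤ -(2A0/(5νe²)) B on [0, 1/ν], so
Grönwall again bounds B(1/ν), and monotonicity carries the bound to all later times.
-/

open Set Real

section ExponentialComparison

variable {f f' : ℝ → ℝ} {K a b : ℝ}

theorem le_mul_exp_of_hasDerivAt_le (hf : ∀ x ∈ Icc a b, HasDerivAt f (f' x) x)
    (bound : ∀ x ∈ Ico a b, f' x ≤ K * f x) :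
    ∀ x ∈ Icc a b, f x ≤ f a * exp (K * (x - a)) := by
  intro x hx
  rw [← gronwallBound_ε0]
  exact le_gronwallBound_of_liminf_deriv_right_le
    (fun y hy => (hf y hy).continuousAt.continuousWithinAt)
    (fun y hy _ hr => (hf y (Ico_subset_Icc_self hy)).hasDerivWithinAt.liminf_right_slope_le hr)
    le_rfl (fun y hy => by simpa using bound y hy) x hx

theorem mul_exp_le_of_le_hasDerivAt (hf : ∀ x ∈ Icc a b, HasDerivAt f (f' x) x)
    (bound : ∀ x ∈ Ico a b, K * f x ≤ f' x) :
    ∀ x ∈ Icc a b, f a * exp (K * (x - a)) ≤ f x := by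
  intro x hx
  have h := le_mul_exp_of_hasDerivAt_le (f := -f) (f' := -f') (K := K)
    (fun y hy => (hf y hy).neg) (fun y hy => by simpa using bound y hy) x hx
  simpa using h

end ExponentialComparison

namespace CenterManifoldModel

variable {ν : ℝ} {A B : ℝ → ℝ}

theorem antitoneOn_B (hν : 0 ≤ ν)
    (hApos : ∀ t : ℝ, 0 ≤ t → 0 ≤ A t) (hBpos : ∀ t : ℝ, 0 ≤ t → 0 ≤ B t)
    (hB : ∀ t : ℝ, 0 ≤ t → HasDerivAt B (-4 * ν * B t - 2 / (5 * ν) * A t * B t) t) :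
    AntitoneOn B (Ici 0) := by
  refine antitoneOn_of_hasDerivWithinAt_nonpos (convex_Ici 0)
    (fun t ht => (hB t ht).continuousAt.continuousWithinAt)
    (fun t ht => (hB t (interior_subset ht)).hasDerivWithinAt) fun t ht => ?_
  have ht : 0 ≤ t := interior_subset ht
  have hAt := hApos t ht
  have hBt := hBpos t ht
  have hAB : 0 ≤ 2 / (5 * ν) * A t * B t := by positivity
  nlinarith

theorem A_zero_mul_exp_le (hν : 0 ≤ ν)
    (hApos : ∀ t : ℝ, 0 ≤ t → 0 ≤ A t) (hBpos : ∀ t : ℝ, 0 ≤ t → 0 ≤ B t)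
    (hA : ∀ t : ℝ, 0 ≤ t → HasDerivAt A (-2 * ν * A t + 3 / (20 * ν) * A t * B t) t)
    {t : ℝ} (ht : 0 ≤ t) : A 0 * exp (-2 * ν * t) ≤ A t := by
  have h := mul_exp_le_of_le_hasDerivAt (K := -2 * ν) (fun s hs => hA s hs.1) (fun s hs => ?_)
    t ⟨ht, le_rfl⟩
  · simpa using h
  have hAs := hApos s hs.1
  have hBs := hBpos s hs.1
  have hAB : 0 ≤ 3 / (20 * ν) * A s * B s := by positivity
  linarith

theorem B_le_B_zero_mul_exp (hν : 0 ≤ ν) (hBpos : ∀ t : ℝ, 0 ≤ t → 0 ≤ B t)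
    (hB : ∀ t : ℝ, 0 ≤ t → HasDerivAt B (-4 * ν * B t - 2 / (5 * ν) * A t * B t) t)
    {a T : ℝ} (hT : 0 ≤ T) (haA : ∀ t ∈ Icc 0 T, a ≤ A t) :
    B T ≤ B 0 * exp (-(2 / (5 * ν) * a) * T) := by
  have h := le_mul_exp_of_hasDerivAt_le (K := -(2 / (5 * ν) * a)) (fun s hs => hB s hs.1)
    (fun s hs => ?_) T ⟨hT, le_rfl⟩
  · simpa using h
  have hBs := hBpos s hs.1
  have hAs : 0 ≤ A s - a := sub_nonneg.mpr (haA s (Ico_subset_Icc_self hs))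
  have hAB : 0 ≤ 2 / (5 * ν) * (A s - a) * B s := by positivity
  nlinarith

end CenterManifoldModel

/-- For nonnegative differentiable A, B solving the planar system
A' = −2νA + (3/(20ν))AB, B' = −4νB − (2/(5ν))AB, B is monotonically nonincreasing on [0,∞)
and B(t) ≤ B0 e^{−2A0/(5ν²e²)} for all t ≥ 1/ν. -/
theorem B_monotone_and_final_bound
    (ν A0 B0 : ℝ) (hν : 0 < ν)
    (A B : ℝ → ℝ)
    (hApos : ∀ t : ℝ, 0 ≤ t → 0 ≤ A t)
    (hBpos : ∀ t : ℝ, 0 ≤ t → 0 ≤ B t)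
    (hA : ∀ t : ℝ, 0 ≤ t → HasDerivAt A (-2 * ν * A t + 3 / (20 * ν) * A t * B t) t)
    (hB : ∀ t : ℝ, 0 ≤ t → HasDerivAt B (-4 * ν * B t - 2 / (5 * ν) * A t * B t) t)
    (hA0 : A 0 = A0) (hB0 : B 0 = B0) :
    (∀ s t : ℝ, 0 ≤ s → s ≤ t → B t ≤ B s)
      ∧ (∀ t : ℝ, 1 / ν ≤ t → B t ≤ B0 * Real.exp (-(2 * A0 / (5 * ν ^ 2 * Real.exp 2)))) := by
  have hanti := CenterManifoldModel.antitoneOn_B hν.le hApos hBpos hB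
  have hT : 0 ≤ 1 / ν := by positivity
  have hAlow : ∀ t ∈ Icc 0 (1 / ν), A0 * exp (-2) ≤ A t := fun t ht => calc
    A0 * exp (-2) ≤ A 0 * exp (-2 * ν * t) := by
      have hνt : ν * t ≤ 1 := by simpa [hν.ne'] using mul_le_mul_of_nonneg_left ht.2 hν.le
      rw [hA0]
      gcongr
      · exact hA0 ▸ hApos 0 le_rfl
      · linarith
    _ ≤ A t := CenterManifoldModel.A_zero_mul_exp_le hν.le hApos hBpos hA ht.1
  have hdecay := CenterManifoldModel.B_le_B_zero_mul_exp hν.le hBpos hB hT hAlow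
  refine ⟨fun s t hs hst => hanti hs (hs.trans hst) hst, fun t ht => ?_⟩
  calc B t ≤ B (1 / ν) := hanti hT (hT.trans ht) ht
    _ ≤ _ := hdecay.trans_eq ?_
  rw [hB0, exp_neg 2]
  field_simp
end

section
/- If ω1, ω3, ω5, ω7 solve the symmetric (δ = 1) center-manifold system and ω3(t) ≠ 0 for all t ≥ 0, then the ratio R(t) = |ω1(t)|²/|ω3(t)|² is differentiable and satisfies R'(t) = (1 + R(t)) (Re P(t) − Re Q(t)), where P(t) = ω1(t) conj(ω3(t)) conj(ω7(t)) / |ω3(t)|² and Q(t) = conj(ω1(t)) conj(ω3(t)) ω5(t) / |ω3(t)|². -/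
/-!
Both `ω1` and `ω3` evolve as `ω' = a ω + (quadratic term)` with the same real rate
`a = -ν + 3 (|ω5|² + |ω7|²) / (40 ν)`, so this rate drops out of the logarithmic derivative of
`|ω1|² / |ω3|²`. The two quadratic terms contribute `Re P - Re Q` and `R (Re P - Re Q)`.
-/

open ComplexConjugate

theorem hasDerivAt_norm_sq_of_hasDerivAt_mul_add {f : ℝ → ℂ} {a : ℝ} {u : ℂ} {t : ℝ}
    (hf : HasDerivAt f (a * f t + u) t) :
    HasDerivAt (‖f ·‖ ^ 2) (2 * a * ‖f t‖ ^ 2 + 2 * (u * conj (f t)).re) t := by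
  refine hf.norm_sq.congr_deriv ?_
  rw [Complex.inner, add_mul, Complex.add_re, mul_assoc, Complex.mul_conj, ← Complex.ofReal_mul,
    Complex.ofReal_re, Complex.normSq_eq_norm_sq]
  ring

theorem hasDerivAt_norm_sq_div_norm_sq_of_common_rate {f g : ℝ → ℂ} {a : ℝ} {u v : ℂ} {t : ℝ}
    (hf : HasDerivAt f (a * f t + u) t) (hg : HasDerivAt g (a * g t + v) t) (hg0 : g t ≠ 0) :
    HasDerivAt (fun s => ‖f s‖ ^ 2 / ‖g s‖ ^ 2)
      ((2 * (u * conj (f t)).re - ‖f t‖ ^ 2 / ‖g t‖ ^ 2 * (2 * (v * conj (g t)).re))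
        / ‖g t‖ ^ 2) t := by
  have hg2 : ‖g t‖ ^ 2 ≠ 0 := by positivity
  refine ((hasDerivAt_norm_sq_of_hasDerivAt_mul_add hf).div
    (hasDerivAt_norm_sq_of_hasDerivAt_mul_add hg) hg2).congr_deriv ?_
  field_simp
  ring

theorem ratio_evolution_general
    (ν : ℝ)
    (ω1 ω3 ω5 ω7 : ℝ → ℂ)
    (h1 : ∀ t : ℝ, 0 ≤ t → HasDerivAt ω1
      (-(ν : ℂ) * ω1 t + (1 / 2 : ℂ) * (ω3 t * ω7 t - (starRingEnd ℂ) (ω3 t) * ω5 t)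
        + ((3 / (40 * ν) : ℝ) : ℂ) * ω1 t
            * ((‖ω5 t‖ ^ 2 + ‖ω7 t‖ ^ 2 : ℝ) : ℂ)) t)
    (h3 : ∀ t : ℝ, 0 ≤ t → HasDerivAt ω3
      (-(ν : ℂ) * ω3 t + (1 / 2 : ℂ) * ((starRingEnd ℂ) (ω1 t) * ω5 t - ω1 t * (starRingEnd ℂ) (ω7 t))
        + ((3 / (40 * ν) : ℝ) : ℂ) * ω3 t
            * ((‖ω5 t‖ ^ 2 + ‖ω7 t‖ ^ 2 : ℝ) : ℂ)) t)
    (h3ne : ∀ t : ℝ, 0 ≤ t → ω3 t ≠ 0) :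
    ∀ t : ℝ, 0 ≤ t →
      HasDerivAt (fun s => ‖ω1 s‖ ^ 2 / ‖ω3 s‖ ^ 2)
        ((1 + ‖ω1 t‖ ^ 2 / ‖ω3 t‖ ^ 2)
          * ((ω1 t * (starRingEnd ℂ) (ω3 t) * (starRingEnd ℂ) (ω7 t)
                / ((‖ω3 t‖ ^ 2 : ℝ) : ℂ)).re
             - ((starRingEnd ℂ) (ω1 t) * (starRingEnd ℂ) (ω3 t) * ω5 t
                / ((‖ω3 t‖ ^ 2 : ℝ) : ℂ)).re)) t := by
  intro t ht
  set a : ℝ := -ν + 3 / (40 * ν) * (‖ω5 t‖ ^ 2 + ‖ω7 t‖ ^ 2)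
  set P := ω1 t * conj (ω3 t) * conj (ω7 t)
  set Q := conj (ω1 t) * conj (ω3 t) * ω5 t
  have hω1 : HasDerivAt ω1 (a * ω1 t + (1 / 2 : ℂ) * (ω3 t * ω7 t - conj (ω3 t) * ω5 t)) t :=
    (h1 t ht).congr_deriv (by push_cast [a]; ring)
  have hω3 : HasDerivAt ω3 (a * ω3 t + (1 / 2 : ℂ) * (conj (ω1 t) * ω5 t - ω1 t * conj (ω7 t))) t :=
    (h3 t ht).congr_deriv (by push_cast [a]; ring)
  have hN1 : 2 * ((1 / 2 : ℂ) * (ω3 t * ω7 t - conj (ω3 t) * ω5 t) * conj (ω1 t)).re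
      = P.re - Q.re := by
    simp only [P, Q, Complex.mul_re, Complex.mul_im, Complex.sub_re, Complex.sub_im,
      Complex.conj_re, Complex.conj_im]
    norm_num
    ring
  have hN3 : 2 * ((1 / 2 : ℂ) * (conj (ω1 t) * ω5 t - ω1 t * conj (ω7 t)) * conj (ω3 t)).re
      = Q.re - P.re := by
    simp only [P, Q, Complex.mul_re, Complex.mul_im, Complex.sub_re, Complex.sub_im,
      Complex.conj_re, Complex.conj_im]
    norm_num
    ring
  refine (hasDerivAt_norm_sq_div_norm_sq_of_common_rate hω1 hω3 (h3ne t ht)).congr_deriv ?_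
  rw [hN1, hN3, Complex.div_ofReal_re, Complex.div_ofReal_re]
  ring

/-- For the symmetric (δ = 1) center-manifold system with ω3(t) ≠ 0 for all t ≥ 0,
the ratio R(t) = |ω1(t)|²/|ω3(t)|² is differentiable and satisfies
R' = (1 + R)(Re P − Re Q), where P = ω1 conj(ω3) conj(ω7)/|ω3|² and
Q = conj(ω1) conj(ω3) ω5/|ω3|². -/
theorem ratio_evolution
    (ν : ℝ) (hν : 0 < ν)
    (ω1 ω3 ω5 ω7 : ℝ → ℂ)
    (h1 : ∀ t : ℝ, 0 ≤ t → HasDerivAt ω1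
      (-(ν : ℂ) * ω1 t + (1 / 2 : ℂ) * (ω3 t * ω7 t - (starRingEnd ℂ) (ω3 t) * ω5 t)
        + ((3 / (40 * ν) : ℝ) : ℂ) * ω1 t
            * ((‖ω5 t‖ ^ 2 + ‖ω7 t‖ ^ 2 : ℝ) : ℂ)) t)
    (h3 : ∀ t : ℝ, 0 ≤ t → HasDerivAt ω3
      (-(ν : ℂ) * ω3 t + (1 / 2 : ℂ) * ((starRingEnd ℂ) (ω1 t) * ω5 t - ω1 t * (starRingEnd ℂ) (ω7 t))
        + ((3 / (40 * ν) : ℝ) : ℂ) * ω3 t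
            * ((‖ω5 t‖ ^ 2 + ‖ω7 t‖ ^ 2 : ℝ) : ℂ)) t)
    (h5 : ∀ t : ℝ, 0 ≤ t → HasDerivAt ω5
      (-((2 * ν : ℝ) : ℂ) * ω5 t - ((1 / (5 * ν) : ℝ) : ℂ) * ω5 t
          * ((‖ω1 t‖ ^ 2 + ‖ω3 t‖ ^ 2 : ℝ) : ℂ)) t)
    (h7 : ∀ t : ℝ, 0 ≤ t → HasDerivAt ω7
      (-((2 * ν : ℝ) : ℂ) * ω7 t - ((1 / (5 * ν) : ℝ) : ℂ) * ω7 t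
          * ((‖ω1 t‖ ^ 2 + ‖ω3 t‖ ^ 2 : ℝ) : ℂ)) t)
    (h3ne : ∀ t : ℝ, 0 ≤ t → ω3 t ≠ 0) :
    ∀ t : ℝ, 0 ≤ t →
      HasDerivAt (fun s => ‖ω1 s‖ ^ 2 / ‖ω3 s‖ ^ 2)
        ((1 + ‖ω1 t‖ ^ 2 / ‖ω3 t‖ ^ 2)
          * ((ω1 t * (starRingEnd ℂ) (ω3 t) * (starRingEnd ℂ) (ω7 t)
                / ((‖ω3 t‖ ^ 2 : ℝ) : ℂ)).re
             - ((starRingEnd ℂ) (ω1 t) * (starRingEnd ℂ) (ω3 t) * ω5 t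
                / ((‖ω3 t‖ ^ 2 : ℝ) : ℂ)).re)) t :=
  ratio_evolution_general ν ω1 ω3 ω5 ω7 h1 h3 h3ne
end

section
/- If ω1, ω3, ω5, ω7 solve the asymmetric center-manifold system with parameters ν > 0 and δ ∈ (√(2/3), √(3/2)), then the energy E(t) = (1/2)(|ω1(t)|² + |ω3(t)|² + |ω5(t)|² + |ω7(t)|²) satisfies E(t) ≤ E(0) e^{−2 K₁ ν t} for all t ≥ 0, where K₁ = min(1, 1/δ²). -/
/-!
For `E = ‖ω₁‖² + ‖ω₃‖² + ‖ω₅‖² + ‖ω₇‖²`, pairing each equation `ωᵢ' = fieldᵢ(ω)` with its own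
mode gives `E' = 2 Σ ⟪ωᵢ, fieldᵢ(ω)⟫`. In this sum the quadratic terms cancel, because their coefficients satisfy
`1/(δ(1+δ²)) - δ³/(1+δ²) + (δ²-1)/δ = 0`, and the cubic terms that feed `ω₁, ω₃` are dominated by
those that drain `ω₅, ω₇`. What is left is the linear damping, whose rates `ν/δ², ν, ν(1+δ²)/δ²`
are all at least `K₁ν`; hence `E' ≤ -2K₁ν E`, and Grönwall's inequality gives the decay.
-/

open Complex ComplexConjugate
open scoped InnerProductSpace

noncomputable section

theorem le_mul_exp_of_hasDerivAt_le_mul {E : ℝ → ℝ} {c : ℝ}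
    (hE : ∀ t, 0 ≤ t → ∃ E', HasDerivAt E E' t ∧ E' ≤ c * E t) {t : ℝ} (ht : 0 ≤ t) :
    E t ≤ E 0 * Real.exp (c * t) := by
  choose! E' hE' hE'_le using hE
  have := le_gronwallBound_of_liminf_deriv_right_le (f := E) (f' := E') (δ := E 0) (K := c) (ε := 0)
    (a := 0) (b := t) (fun x hx => (hE' x hx.1).continuousAt.continuousWithinAt)
    (fun x hx r hr => by
      simpa [slope_def_field, div_eq_inv_mul] using
        (hE' x hx.1).hasDerivWithinAt.liminf_right_slope_le hr)
    le_rfl (fun x hx => by simpa using hE'_le x hx.1) t ⟨ht, le_rfl⟩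
  rwa [sub_zero, gronwallBound_ε0] at this

namespace CenterManifold

variable (ν δ : ℝ) (z₁ z₃ z₅ z₇ : ℂ)

def field₁ : ℂ :=
  -((ν / δ ^ 2 : ℝ) : ℂ) * z₁
    + ((1 / (δ * (1 + δ ^ 2)) : ℝ) : ℂ) * (z₃ * z₇ - conj z₃ * z₅)
    + ((3 * δ ^ 6 / (2 * ν * (4 + δ ^ 2) * (1 + δ ^ 2) ^ 2) : ℝ) : ℂ) * z₁
        * ((‖z₅‖ ^ 2 + ‖z₇‖ ^ 2 : ℝ) : ℂ)

def field₃ : ℂ :=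
  -(ν : ℂ) * z₃
    + ((δ ^ 3 / (1 + δ ^ 2) : ℝ) : ℂ) * (conj z₁ * z₅ - z₁ * conj z₇)
    + ((3 * δ ^ 2 / (2 * ν * (1 + 4 * δ ^ 2) * (1 + δ ^ 2) ^ 2) : ℝ) : ℂ) * z₃
        * ((‖z₅‖ ^ 2 + ‖z₇‖ ^ 2 : ℝ) : ℂ)

def field₅ : ℂ :=
  -((ν * (1 + δ ^ 2) / δ ^ 2 : ℝ) : ℂ) * z₅
    - (((δ ^ 2 - 1) / δ : ℝ) : ℂ) * z₁ * z₃
    - ((δ ^ 6 * (3 + δ ^ 2) / (2 * ν * (4 + δ ^ 2) * (1 + δ ^ 2)) : ℝ) : ℂ) * z₅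
        * ((‖z₁‖ ^ 2 : ℝ) : ℂ)
    - (((1 + 3 * δ ^ 2) / (2 * ν * δ ^ 2 * (1 + 4 * δ ^ 2) * (1 + δ ^ 2)) : ℝ) : ℂ) * z₅
        * ((‖z₃‖ ^ 2 : ℝ) : ℂ)

def field₇ : ℂ :=
  -((ν * (1 + δ ^ 2) / δ ^ 2 : ℝ) : ℂ) * z₇
    + (((δ ^ 2 - 1) / δ : ℝ) : ℂ) * z₁ * conj z₃
    - ((δ ^ 6 * (3 + δ ^ 2) / (2 * ν * (4 + δ ^ 2) * (1 + δ ^ 2)) : ℝ) : ℂ) * z₇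
        * ((‖z₁‖ ^ 2 : ℝ) : ℂ)
    - (((1 + 3 * δ ^ 2) / (2 * ν * δ ^ 2 * (1 + 4 * δ ^ 2) * (1 + δ ^ 2)) : ℝ) : ℂ) * z₇
        * ((‖z₃‖ ^ 2 : ℝ) : ℂ)

theorem inner_field₁ :
    ⟪z₁, field₁ ν δ z₁ z₃ z₅ z₇⟫_ℝ = -(ν / δ ^ 2) * ‖z₁‖ ^ 2
      + 1 / (δ * (1 + δ ^ 2)) * ((conj z₁ * z₃ * z₇).re - (conj z₁ * conj z₃ * z₅).re)
      + 3 * δ ^ 6 / (2 * ν * (4 + δ ^ 2) * (1 + δ ^ 2) ^ 2) * ‖z₁‖ ^ 2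
          * (‖z₅‖ ^ 2 + ‖z₇‖ ^ 2) := by
  simp only [Complex.inner, field₁, mul_re, mul_im, add_re, add_im, sub_re, sub_im, neg_re, neg_im,
    ofReal_re, ofReal_im, conj_re, conj_im, ← normSq_eq_norm_sq, normSq_apply]
  ring

theorem inner_field₃ :
    ⟪z₃, field₃ ν δ z₁ z₃ z₅ z₇⟫_ℝ = -ν * ‖z₃‖ ^ 2
      + δ ^ 3 / (1 + δ ^ 2) * ((conj z₁ * conj z₃ * z₅).re - (conj z₁ * z₃ * z₇).re)
      + 3 * δ ^ 2 / (2 * ν * (1 + 4 * δ ^ 2) * (1 + δ ^ 2) ^ 2) * ‖z₃‖ ^ 2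
          * (‖z₅‖ ^ 2 + ‖z₇‖ ^ 2) := by
  simp only [Complex.inner, field₃, mul_re, mul_im, add_re, add_im, sub_re, sub_im, neg_re, neg_im,
    ofReal_re, ofReal_im, conj_re, conj_im, ← normSq_eq_norm_sq, normSq_apply]
  ring

theorem inner_field₅ :
    ⟪z₅, field₅ ν δ z₁ z₃ z₅⟫_ℝ = -(ν * (1 + δ ^ 2) / δ ^ 2) * ‖z₅‖ ^ 2
      - (δ ^ 2 - 1) / δ * (conj z₁ * conj z₃ * z₅).re
      - δ ^ 6 * (3 + δ ^ 2) / (2 * ν * (4 + δ ^ 2) * (1 + δ ^ 2)) * ‖z₁‖ ^ 2 * ‖z₅‖ ^ 2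
      - (1 + 3 * δ ^ 2) / (2 * ν * δ ^ 2 * (1 + 4 * δ ^ 2) * (1 + δ ^ 2)) * ‖z₃‖ ^ 2
          * ‖z₅‖ ^ 2 := by
  simp only [Complex.inner, field₅, mul_re, mul_im, sub_re, sub_im, neg_re, neg_im,
    ofReal_re, ofReal_im, conj_re, conj_im, ← normSq_eq_norm_sq, normSq_apply]
  ring

theorem inner_field₇ :
    ⟪z₇, field₇ ν δ z₁ z₃ z₇⟫_ℝ = -(ν * (1 + δ ^ 2) / δ ^ 2) * ‖z₇‖ ^ 2
      + (δ ^ 2 - 1) / δ * (conj z₁ * z₃ * z₇).re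
      - δ ^ 6 * (3 + δ ^ 2) / (2 * ν * (4 + δ ^ 2) * (1 + δ ^ 2)) * ‖z₁‖ ^ 2 * ‖z₇‖ ^ 2
      - (1 + 3 * δ ^ 2) / (2 * ν * δ ^ 2 * (1 + 4 * δ ^ 2) * (1 + δ ^ 2)) * ‖z₃‖ ^ 2
          * ‖z₇‖ ^ 2 := by
  simp only [Complex.inner, field₇, mul_re, mul_im, add_re, add_im, sub_re, sub_im, neg_re, neg_im,
    ofReal_re, ofReal_im, conj_re, conj_im, ← normSq_eq_norm_sq, normSq_apply]
  ring

theorem triad_coeff_sum_eq_zero (hδ : δ ≠ 0) :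
    1 / (δ * (1 + δ ^ 2)) - δ ^ 3 / (1 + δ ^ 2) + (δ ^ 2 - 1) / δ = 0 := by
  field_simp
  ring

theorem inner_field_sum_eq (hδ : δ ≠ 0) :
    ⟪z₁, field₁ ν δ z₁ z₃ z₅ z₇⟫_ℝ + ⟪z₃, field₃ ν δ z₁ z₃ z₅ z₇⟫_ℝ
        + ⟪z₅, field₅ ν δ z₁ z₃ z₅⟫_ℝ + ⟪z₇, field₇ ν δ z₁ z₃ z₇⟫_ℝ
      = -(ν / δ ^ 2 * ‖z₁‖ ^ 2 + ν * ‖z₃‖ ^ 2 + ν * (1 + δ ^ 2) / δ ^ 2 * (‖z₅‖ ^ 2 + ‖z₇‖ ^ 2))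
        - (δ ^ 6 * (3 + δ ^ 2) / (2 * ν * (4 + δ ^ 2) * (1 + δ ^ 2))
            - 3 * δ ^ 6 / (2 * ν * (4 + δ ^ 2) * (1 + δ ^ 2) ^ 2)) * ‖z₁‖ ^ 2 * (‖z₅‖ ^ 2 + ‖z₇‖ ^ 2)
        - ((1 + 3 * δ ^ 2) / (2 * ν * δ ^ 2 * (1 + 4 * δ ^ 2) * (1 + δ ^ 2))
            - 3 * δ ^ 2 / (2 * ν * (1 + 4 * δ ^ 2) * (1 + δ ^ 2) ^ 2)) * ‖z₃‖ ^ 2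
              * (‖z₅‖ ^ 2 + ‖z₇‖ ^ 2) := by
  rw [inner_field₁, inner_field₃, inner_field₅, inner_field₇]
  linear_combination ((conj z₁ * z₃ * z₇).re - (conj z₁ * conj z₃ * z₅).re)
    * triad_coeff_sum_eq_zero δ hδ

theorem cubic_coeff₁_le (hν : 0 < ν) :
    3 * δ ^ 6 / (2 * ν * (4 + δ ^ 2) * (1 + δ ^ 2) ^ 2)
      ≤ δ ^ 6 * (3 + δ ^ 2) / (2 * ν * (4 + δ ^ 2) * (1 + δ ^ 2)) := by
  rw [div_le_div_iff₀ (by positivity) (by positivity)]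
  have : 0 ≤ δ ^ 6 * (2 * ν * (4 + δ ^ 2) * (1 + δ ^ 2)) * (δ ^ 2 * (4 + δ ^ 2)) := by positivity
  linear_combination this

theorem cubic_coeff₃_le (hν : 0 < ν) (hδ : δ ≠ 0) :
    3 * δ ^ 2 / (2 * ν * (1 + 4 * δ ^ 2) * (1 + δ ^ 2) ^ 2)
      ≤ (1 + 3 * δ ^ 2) / (2 * ν * δ ^ 2 * (1 + 4 * δ ^ 2) * (1 + δ ^ 2)) := by
  rw [div_le_div_iff₀ (by positivity) (by positivity)]
  have : 0 ≤ 2 * ν * (1 + 4 * δ ^ 2) ^ 2 * (1 + δ ^ 2) := by positivity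
  linear_combination this

theorem inner_field_sum_le (hν : 0 < ν) (hδ : 0 < δ) :
    ⟪z₁, field₁ ν δ z₁ z₃ z₅ z₇⟫_ℝ + ⟪z₃, field₃ ν δ z₁ z₃ z₅ z₇⟫_ℝ
        + ⟪z₅, field₅ ν δ z₁ z₃ z₅⟫_ℝ + ⟪z₇, field₇ ν δ z₁ z₃ z₇⟫_ℝ
      ≤ -(min 1 (1 / δ ^ 2) * ν) * (‖z₁‖ ^ 2 + ‖z₃‖ ^ 2 + ‖z₅‖ ^ 2 + ‖z₇‖ ^ 2) := by
  rw [inner_field_sum_eq ν δ z₁ z₃ z₅ z₇ hδ.ne']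
  set K := min 1 (1 / δ ^ 2) * ν
  have hK₃ : K ≤ ν := by
    simpa using mul_le_mul_of_nonneg_right (min_le_left 1 (1 / δ ^ 2)) hν.le
  have hK₁ : K ≤ ν / δ ^ 2 :=
    (mul_le_mul_of_nonneg_right (min_le_right 1 (1 / δ ^ 2)) hν.le).trans_eq (one_div_mul_eq_div _ _)
  have hK₅ : K ≤ ν * (1 + δ ^ 2) / δ ^ 2 := by
    have : ν * (1 + δ ^ 2) / δ ^ 2 = ν / δ ^ 2 + ν := by field_simp
    linarith
  have cubic₁ := mul_nonneg (mul_nonneg (sub_nonneg.2 (cubic_coeff₁_le ν δ hν)) (sq_nonneg ‖z₁‖))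
    (add_nonneg (sq_nonneg ‖z₅‖) (sq_nonneg ‖z₇‖))
  have cubic₃ := mul_nonneg (mul_nonneg (sub_nonneg.2 (cubic_coeff₃_le ν δ hν hδ.ne'))
    (sq_nonneg ‖z₃‖)) (add_nonneg (sq_nonneg ‖z₅‖) (sq_nonneg ‖z₇‖))
  linarith [mul_le_mul_of_nonneg_right hK₁ (sq_nonneg ‖z₁‖),
    mul_le_mul_of_nonneg_right hK₃ (sq_nonneg ‖z₃‖),
    mul_le_mul_of_nonneg_right hK₅ (add_nonneg (sq_nonneg ‖z₅‖) (sq_nonneg ‖z₇‖))]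

end CenterManifold

end

theorem energy_decay_general
    (ν δ : ℝ) (hν : 0 < ν)
    (hδ1 : Real.sqrt (2 / 3) < δ)
    (ω1 ω3 ω5 ω7 : ℝ → ℂ)
    (h1 : ∀ t : ℝ, 0 ≤ t → HasDerivAt ω1
      (-((ν / δ ^ 2 : ℝ) : ℂ) * ω1 t
        + ((1 / (δ * (1 + δ ^ 2)) : ℝ) : ℂ) * (ω3 t * ω7 t - (starRingEnd ℂ) (ω3 t) * ω5 t)
        + ((3 * δ ^ 6 / (2 * ν * (4 + δ ^ 2) * (1 + δ ^ 2) ^ 2) : ℝ) : ℂ) * ω1 t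
            * ((‖ω5 t‖ ^ 2 + ‖ω7 t‖ ^ 2 : ℝ) : ℂ)) t)
    (h3 : ∀ t : ℝ, 0 ≤ t → HasDerivAt ω3
      (-(ν : ℂ) * ω3 t
        + ((δ ^ 3 / (1 + δ ^ 2) : ℝ) : ℂ) * ((starRingEnd ℂ) (ω1 t) * ω5 t - ω1 t * (starRingEnd ℂ) (ω7 t))
        + ((3 * δ ^ 2 / (2 * ν * (1 + 4 * δ ^ 2) * (1 + δ ^ 2) ^ 2) : ℝ) : ℂ) * ω3 t
            * ((‖ω5 t‖ ^ 2 + ‖ω7 t‖ ^ 2 : ℝ) : ℂ)) t)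
    (h5 : ∀ t : ℝ, 0 ≤ t → HasDerivAt ω5
      (-((ν * (1 + δ ^ 2) / δ ^ 2 : ℝ) : ℂ) * ω5 t
        - (((δ ^ 2 - 1) / δ : ℝ) : ℂ) * ω1 t * ω3 t
        - ((δ ^ 6 * (3 + δ ^ 2) / (2 * ν * (4 + δ ^ 2) * (1 + δ ^ 2)) : ℝ) : ℂ) * ω5 t
            * ((‖ω1 t‖ ^ 2 : ℝ) : ℂ)
        - (((1 + 3 * δ ^ 2) / (2 * ν * δ ^ 2 * (1 + 4 * δ ^ 2) * (1 + δ ^ 2)) : ℝ) : ℂ) * ω5 t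
            * ((‖ω3 t‖ ^ 2 : ℝ) : ℂ)) t)
    (h7 : ∀ t : ℝ, 0 ≤ t → HasDerivAt ω7
      (-((ν * (1 + δ ^ 2) / δ ^ 2 : ℝ) : ℂ) * ω7 t
        + (((δ ^ 2 - 1) / δ : ℝ) : ℂ) * ω1 t * (starRingEnd ℂ) (ω3 t)
        - ((δ ^ 6 * (3 + δ ^ 2) / (2 * ν * (4 + δ ^ 2) * (1 + δ ^ 2)) : ℝ) : ℂ) * ω7 t
            * ((‖ω1 t‖ ^ 2 : ℝ) : ℂ)
        - (((1 + 3 * δ ^ 2) / (2 * ν * δ ^ 2 * (1 + 4 * δ ^ 2) * (1 + δ ^ 2)) : ℝ) : ℂ) * ω7 t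
            * ((‖ω3 t‖ ^ 2 : ℝ) : ℂ)) t)
    :
    ∀ t : ℝ, 0 ≤ t →
      (1 / 2) * (‖ω1 t‖ ^ 2 + ‖ω3 t‖ ^ 2
          + ‖ω5 t‖ ^ 2 + ‖ω7 t‖ ^ 2)
        ≤ (1 / 2) * (‖ω1 0‖ ^ 2 + ‖ω3 0‖ ^ 2
            + ‖ω5 0‖ ^ 2 + ‖ω7 0‖ ^ 2)
          * Real.exp (-2 * min 1 (1 / δ ^ 2) * ν * t) := by
  open CenterManifold in
  intro t ht
  have hδ : 0 < δ := (Real.sqrt_pos.2 (by norm_num)).trans hδ1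
  suffices ‖ω1 t‖ ^ 2 + ‖ω3 t‖ ^ 2 + ‖ω5 t‖ ^ 2 + ‖ω7 t‖ ^ 2
      ≤ (‖ω1 0‖ ^ 2 + ‖ω3 0‖ ^ 2 + ‖ω5 0‖ ^ 2 + ‖ω7 0‖ ^ 2)
        * Real.exp (-2 * min 1 (1 / δ ^ 2) * ν * t) by linarith
  refine le_mul_exp_of_hasDerivAt_le_mul
    (E := fun s => ‖ω1 s‖ ^ 2 + ‖ω3 s‖ ^ 2 + ‖ω5 s‖ ^ 2 + ‖ω7 s‖ ^ 2) (fun s hs => ?_) ht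
  have d1 : HasDerivAt ω1 (field₁ ν δ (ω1 s) (ω3 s) (ω5 s) (ω7 s)) s := h1 s hs
  have d3 : HasDerivAt ω3 (field₃ ν δ (ω1 s) (ω3 s) (ω5 s) (ω7 s)) s := h3 s hs
  have d5 : HasDerivAt ω5 (field₅ ν δ (ω1 s) (ω3 s) (ω5 s)) s := h5 s hs
  have d7 : HasDerivAt ω7 (field₇ ν δ (ω1 s) (ω3 s) (ω7 s)) s := h7 s hs
  refine ⟨_, ((d1.norm_sq.add d3.norm_sq).add d5.norm_sq).add d7.norm_sq, ?_⟩
  linarith [inner_field_sum_le ν δ (ω1 s) (ω3 s) (ω5 s) (ω7 s) hν hδ]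

/-- For the asymmetric center-manifold system with ν > 0 and
δ ∈ (√(2/3), √(3/2)), the energy E(t) = (1/2)(|ω1|² + |ω3|² + |ω5|² + |ω7|²) satisfies
E(t) ≤ E(0) e^{−2K₁νt} for all t ≥ 0, where K₁ = min(1, 1/δ²). -/
theorem energy_decay
    (ν δ : ℝ) (hν : 0 < ν)
    (hδ1 : Real.sqrt (2 / 3) < δ) (hδ2 : δ < Real.sqrt (3 / 2))
    (ω1 ω3 ω5 ω7 : ℝ → ℂ)
    (h1 : ∀ t : ℝ, 0 ≤ t → HasDerivAt ω1
      (-((ν / δ ^ 2 : ℝ) : ℂ) * ω1 t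
        + ((1 / (δ * (1 + δ ^ 2)) : ℝ) : ℂ) * (ω3 t * ω7 t - (starRingEnd ℂ) (ω3 t) * ω5 t)
        + ((3 * δ ^ 6 / (2 * ν * (4 + δ ^ 2) * (1 + δ ^ 2) ^ 2) : ℝ) : ℂ) * ω1 t
            * ((‖ω5 t‖ ^ 2 + ‖ω7 t‖ ^ 2 : ℝ) : ℂ)) t)
    (h3 : ∀ t : ℝ, 0 ≤ t → HasDerivAt ω3
      (-(ν : ℂ) * ω3 t
        + ((δ ^ 3 / (1 + δ ^ 2) : ℝ) : ℂ) * ((starRingEnd ℂ) (ω1 t) * ω5 t - ω1 t * (starRingEnd ℂ) (ω7 t))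
        + ((3 * δ ^ 2 / (2 * ν * (1 + 4 * δ ^ 2) * (1 + δ ^ 2) ^ 2) : ℝ) : ℂ) * ω3 t
            * ((‖ω5 t‖ ^ 2 + ‖ω7 t‖ ^ 2 : ℝ) : ℂ)) t)
    (h5 : ∀ t : ℝ, 0 ≤ t → HasDerivAt ω5
      (-((ν * (1 + δ ^ 2) / δ ^ 2 : ℝ) : ℂ) * ω5 t
        - (((δ ^ 2 - 1) / δ : ℝ) : ℂ) * ω1 t * ω3 t
        - ((δ ^ 6 * (3 + δ ^ 2) / (2 * ν * (4 + δ ^ 2) * (1 + δ ^ 2)) : ℝ) : ℂ) * ω5 t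
            * ((‖ω1 t‖ ^ 2 : ℝ) : ℂ)
        - (((1 + 3 * δ ^ 2) / (2 * ν * δ ^ 2 * (1 + 4 * δ ^ 2) * (1 + δ ^ 2)) : ℝ) : ℂ) * ω5 t
            * ((‖ω3 t‖ ^ 2 : ℝ) : ℂ)) t)
    (h7 : ∀ t : ℝ, 0 ≤ t → HasDerivAt ω7
      (-((ν * (1 + δ ^ 2) / δ ^ 2 : ℝ) : ℂ) * ω7 t
        + (((δ ^ 2 - 1) / δ : ℝ) : ℂ) * ω1 t * (starRingEnd ℂ) (ω3 t)
        - ((δ ^ 6 * (3 + δ ^ 2) / (2 * ν * (4 + δ ^ 2) * (1 + δ ^ 2)) : ℝ) : ℂ) * ω7 t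
            * ((‖ω1 t‖ ^ 2 : ℝ) : ℂ)
        - (((1 + 3 * δ ^ 2) / (2 * ν * δ ^ 2 * (1 + 4 * δ ^ 2) * (1 + δ ^ 2)) : ℝ) : ℂ) * ω7 t
            * ((‖ω3 t‖ ^ 2 : ℝ) : ℂ)) t)
    :
    ∀ t : ℝ, 0 ≤ t →
      (1 / 2) * (‖ω1 t‖ ^ 2 + ‖ω3 t‖ ^ 2
          + ‖ω5 t‖ ^ 2 + ‖ω7 t‖ ^ 2)
        ≤ (1 / 2) * (‖ω1 0‖ ^ 2 + ‖ω3 0‖ ^ 2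
            + ‖ω5 0‖ ^ 2 + ‖ω7 0‖ ^ 2)
          * Real.exp (-2 * min 1 (1 / δ ^ 2) * ν * t) :=
  energy_decay_general ν δ hν hδ1 ω1 ω3 ω5 ω7 h1 h3 h5 h7
end

section
/- Let ω1, ω3, ω5, ω7 solve the asymmetric center-manifold system with parameters ν > 0 and δ ∈ (√(2/3), √(3/2)), let η > 0 satisfy |δ² − 1| < η, and set A(t) = |ω1(t)|² + |ω3(t)|², B(t) = |ω5(t)|² + |ω7(t)|², A0 = A(0), B0 = B(0). Then for all t ≥ 0, A(t) ≥ A0 · exp[ −( 2ν max(1, 1/δ²) + 4√2 (η/δ²) √(A0 + B0) ) t ]. Consequently, with K₂ = 2 max(1, 1/δ²) + 6√2 √(A0 + B0), one has A(t) ≥ A0 e^{−K₂} for all 0 ≤ t ≤ min(1/ν, 1/η). -/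
/-!
The triad terms move energy between the low modes `ω1, ω3` and the high modes `ω5, ω7` with
opposite coefficients `(1 - δ²)/δ` and `(δ² - 1)/δ`, and the cubic gain of the low modes is
dominated by the cubic loss of the high modes; hence the total energy `A + B` is nonincreasing
and `B(t) ≤ A0 + B0`. In the balance for `A`, the linear damping is at least
`-2ν max(1, 1/δ²) A`, the cubic terms are nonnegative, and the triad term is bounded by
`2 |1 - δ²|/δ · |ω1| |ω3| (|ω5| + |ω7|) ≤ √2 (η/δ) √(A0 + B0) A`. So `A' ≥ -K A`, and
`A(t) e^{K t}` is nondecreasing. For `t ≤ min(1/ν, 1/η)` one has `K t ≤ K₂` because `δ² > 2/3`.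
-/

open Real ComplexConjugate

theorem add_le_sqrt_two_mul_sqrt_sq_add_sq (c d : ℝ) : c + d ≤ √2 * √(c ^ 2 + d ^ 2) := by
  rw [← sqrt_mul zero_le_two]
  exact le_sqrt_of_sq_le (by linarith [sq_nonneg (c - d)])

theorem mul_exp_neg_mul_le_of_hasDerivAt {f f' : ℝ → ℝ} {K t : ℝ}
    (hf : ∀ s, 0 ≤ s → HasDerivAt f (f' s) s) (hf' : ∀ s, 0 ≤ s → -K * f s ≤ f' s)
    (ht : 0 ≤ t) : f 0 * exp (-K * t) ≤ f t := by
  have hg : ∀ s, 0 ≤ s → HasDerivAt (fun s => f s * exp (K * s))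
      (f' s * exp (K * s) + f s * (exp (K * s) * K)) s := fun s hs =>
    (hf s hs).mul ((hasDerivAt_id s).const_mul K |>.congr_deriv (mul_one K)).exp
  have hmono : MonotoneOn (fun s => f s * exp (K * s)) (Set.Ici 0) := by
    refine monotoneOn_of_hasDerivWithinAt_nonneg (convex_Ici 0)
      (fun s hs => (hg s hs).continuousAt.continuousWithinAt)
      (fun s hs => (hg s (interior_subset hs)).hasDerivWithinAt) fun s hs => ?_
    have hs : 0 ≤ s := interior_subset hs
    nlinarith [hf' s hs, exp_pos (K * s)]
  have := hmono Set.self_mem_Ici ht ht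
  dsimp only at this
  rw [mul_zero, exp_zero, mul_one] at this
  rwa [neg_mul, exp_neg, ← div_eq_mul_inv, div_le_iff₀ (exp_pos _)]

noncomputable section

namespace AsymmetricCenterManifold

variable (ν δ : ℝ)

def gain1 : ℝ := 3 * δ ^ 6 / (2 * ν * (4 + δ ^ 2) * (1 + δ ^ 2) ^ 2)

def gain3 : ℝ := 3 * δ ^ 2 / (2 * ν * (1 + 4 * δ ^ 2) * (1 + δ ^ 2) ^ 2)

def loss1 : ℝ := δ ^ 6 * (3 + δ ^ 2) / (2 * ν * (4 + δ ^ 2) * (1 + δ ^ 2))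

def loss3 : ℝ := (1 + 3 * δ ^ 2) / (2 * ν * δ ^ 2 * (1 + 4 * δ ^ 2) * (1 + δ ^ 2))

def rhs1 (w1 w3 w5 w7 : ℂ) : ℂ :=
  -((ν / δ ^ 2 : ℝ) : ℂ) * w1 + ((1 / (δ * (1 + δ ^ 2)) : ℝ) : ℂ) * (w3 * w7 - conj w3 * w5)
    + (gain1 ν δ : ℂ) * w1 * ((‖w5‖ ^ 2 + ‖w7‖ ^ 2 : ℝ) : ℂ)

def rhs3 (w1 w3 w5 w7 : ℂ) : ℂ :=
  -(ν : ℂ) * w3 + ((δ ^ 3 / (1 + δ ^ 2) : ℝ) : ℂ) * (conj w1 * w5 - w1 * conj w7)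
    + (gain3 ν δ : ℂ) * w3 * ((‖w5‖ ^ 2 + ‖w7‖ ^ 2 : ℝ) : ℂ)

def rhs5 (w1 w3 w5 : ℂ) : ℂ :=
  -((ν * (1 + δ ^ 2) / δ ^ 2 : ℝ) : ℂ) * w5 - (((δ ^ 2 - 1) / δ : ℝ) : ℂ) * w1 * w3
    - (loss1 ν δ : ℂ) * w5 * ((‖w1‖ ^ 2 : ℝ) : ℂ) - (loss3 ν δ : ℂ) * w5 * ((‖w3‖ ^ 2 : ℝ) : ℂ)

def rhs7 (w1 w3 w7 : ℂ) : ℂ :=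
  -((ν * (1 + δ ^ 2) / δ ^ 2 : ℝ) : ℂ) * w7 + (((δ ^ 2 - 1) / δ : ℝ) : ℂ) * w1 * conj w3
    - (loss1 ν δ : ℂ) * w7 * ((‖w1‖ ^ 2 : ℝ) : ℂ) - (loss3 ν δ : ℂ) * w7 * ((‖w3‖ ^ 2 : ℝ) : ℂ)

-- `(z * conj w).re = ⟪w, z⟫_ℝ`, so `lowRate` and `highRate` are half the rates of change of
-- `|ω1|² + |ω3|²` and `|ω5|² + |ω7|²` along the flow.
def lowRate (w1 w3 w5 w7 : ℂ) : ℝ :=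
  (rhs1 ν δ w1 w3 w5 w7 * conj w1).re + (rhs3 ν δ w1 w3 w5 w7 * conj w3).re

def highRate (w1 w3 w5 w7 : ℂ) : ℝ :=
  (rhs5 ν δ w1 w3 w5 * conj w5).re + (rhs7 ν δ w1 w3 w7 * conj w7).re

def triad (w1 w3 w5 w7 : ℂ) : ℝ := (w1 * conj w3 * conj w7 - conj w1 * conj w3 * w5).re

variable {ν δ}

theorem gain1_nonneg (hν : 0 ≤ ν) : 0 ≤ gain1 ν δ := by unfold gain1; positivity

theorem gain3_nonneg (hν : 0 ≤ ν) : 0 ≤ gain3 ν δ := by unfold gain3; positivity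

theorem gain1_le_loss1 (hν : 0 < ν) : gain1 ν δ ≤ loss1 ν δ := by
  unfold gain1 loss1
  rw [div_le_div_iff₀ (by positivity) (by positivity)]
  have : 0 ≤ 2 * ν * (4 + δ ^ 2) * (1 + δ ^ 2) * δ ^ 6 * (4 * δ ^ 2 + δ ^ 4) := by positivity
  linarith

theorem gain3_le_loss3 (hν : 0 < ν) (hδ : δ ≠ 0) : gain3 ν δ ≤ loss3 ν δ := by
  unfold gain3 loss3
  rw [div_le_div_iff₀ (by positivity) (by positivity)]
  have : 0 ≤ 2 * ν * (1 + 4 * δ ^ 2) * (1 + δ ^ 2) * (1 + 4 * δ ^ 2) := by positivity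
  linarith

theorem lowRate_eq (hδ : δ ≠ 0) (w1 w3 w5 w7 : ℂ) :
    lowRate ν δ w1 w3 w5 w7 = -(ν / δ ^ 2) * ‖w1‖ ^ 2 - ν * ‖w3‖ ^ 2
      + (1 - δ ^ 2) / δ * triad w1 w3 w5 w7
      + (gain1 ν δ * ‖w1‖ ^ 2 + gain3 ν δ * ‖w3‖ ^ 2) * (‖w5‖ ^ 2 + ‖w7‖ ^ 2) := by
  rw [show (1 - δ ^ 2) / δ = 1 / (δ * (1 + δ ^ 2)) - δ ^ 3 / (1 + δ ^ 2) by field_simp; ring]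
  simp only [lowRate, rhs1, rhs3, triad, Complex.mul_re, Complex.mul_im, Complex.add_re,
    Complex.add_im, Complex.sub_re, Complex.sub_im, Complex.neg_re, Complex.neg_im,
    Complex.conj_re, Complex.conj_im, Complex.ofReal_re, Complex.ofReal_im, Complex.sq_norm,
    Complex.normSq_apply]
  ring

theorem highRate_eq (w1 w3 w5 w7 : ℂ) :
    highRate ν δ w1 w3 w5 w7 = -(ν * (1 + δ ^ 2) / δ ^ 2) * (‖w5‖ ^ 2 + ‖w7‖ ^ 2)
      + (δ ^ 2 - 1) / δ * triad w1 w3 w5 w7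
      - (loss1 ν δ * ‖w1‖ ^ 2 + loss3 ν δ * ‖w3‖ ^ 2) * (‖w5‖ ^ 2 + ‖w7‖ ^ 2) := by
  simp only [highRate, rhs5, rhs7, triad, Complex.mul_re, Complex.mul_im, Complex.add_re,
    Complex.add_im, Complex.sub_re, Complex.sub_im, Complex.neg_re, Complex.neg_im,
    Complex.conj_re, Complex.conj_im, Complex.ofReal_re, Complex.ofReal_im, Complex.sq_norm,
    Complex.normSq_apply]
  ring

theorem lowRate_add_highRate_nonpos (hν : 0 < ν) (hδ : δ ≠ 0) (w1 w3 w5 w7 : ℂ) :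
    lowRate ν δ w1 w3 w5 w7 + highRate ν δ w1 w3 w5 w7 ≤ 0 := by
  have h1 := gain1_le_loss1 (δ := δ) hν
  have h3 := gain3_le_loss3 hν hδ
  rw [lowRate_eq hδ, highRate_eq]
  have hcubic : 0 ≤ ((loss1 ν δ - gain1 ν δ) * ‖w1‖ ^ 2 + (loss3 ν δ - gain3 ν δ) * ‖w3‖ ^ 2)
      * (‖w5‖ ^ 2 + ‖w7‖ ^ 2) := by
    have := sub_nonneg.2 h1; have := sub_nonneg.2 h3; positivity
  have hlinear : 0 ≤ ν / δ ^ 2 * ‖w1‖ ^ 2 + ν * ‖w3‖ ^ 2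
      + ν * (1 + δ ^ 2) / δ ^ 2 * (‖w5‖ ^ 2 + ‖w7‖ ^ 2) := by
    positivity
  linear_combination hlinear + hcubic

theorem abs_triad_le (w1 w3 w5 w7 : ℂ) :
    |triad w1 w3 w5 w7| ≤ ‖w1‖ * ‖w3‖ * (‖w5‖ + ‖w7‖) :=
  calc |triad w1 w3 w5 w7|
      ≤ ‖w1 * conj w3 * conj w7 - conj w1 * conj w3 * w5‖ := Complex.abs_re_le_norm _
    _ ≤ ‖w1 * conj w3 * conj w7‖ + ‖conj w1 * conj w3 * w5‖ := norm_sub_le _ _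
    _ = ‖w1‖ * ‖w3‖ * (‖w5‖ + ‖w7‖) := by simp only [norm_mul, Complex.norm_conj]; ring

theorem neg_mul_le_lowRate (hν : 0 ≤ ν) (hδ : δ ≠ 0) (w1 w3 w5 w7 : ℂ) :
    -(ν * max 1 (1 / δ ^ 2) + |(1 - δ ^ 2) / δ| * (√2 / 2) * √(‖w5‖ ^ 2 + ‖w7‖ ^ 2))
        * (‖w1‖ ^ 2 + ‖w3‖ ^ 2) ≤ lowRate ν δ w1 w3 w5 w7 := by
  rw [lowRate_eq hδ]
  set c := (1 - δ ^ 2) / δ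
  set A := ‖w1‖ ^ 2 + ‖w3‖ ^ 2
  set r := √(‖w5‖ ^ 2 + ‖w7‖ ^ 2)
  have hdiss : ν / δ ^ 2 * ‖w1‖ ^ 2 + ν * ‖w3‖ ^ 2 ≤ ν * max 1 (1 / δ ^ 2) * A := by
    have h1 : ν / δ ^ 2 ≤ ν * max 1 (1 / δ ^ 2) := by
      rw [div_eq_mul_one_div]; exact mul_le_mul_of_nonneg_left (le_max_right _ _) hν
    have h3 : ν ≤ ν * max 1 (1 / δ ^ 2) := le_mul_of_one_le_right hν (le_max_left _ _)
    have := mul_le_mul_of_nonneg_right h1 (sq_nonneg ‖w1‖)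
    have := mul_le_mul_of_nonneg_right h3 (sq_nonneg ‖w3‖)
    linarith
  have hprod : ‖w1‖ * ‖w3‖ * (‖w5‖ + ‖w7‖) ≤ A / 2 * (√2 * r) :=
    mul_le_mul (by linarith [two_mul_le_add_sq ‖w1‖ ‖w3‖])
      (add_le_sqrt_two_mul_sqrt_sq_add_sq _ _) (by positivity) (by positivity)
  have htriad : -(|c| * (A / 2 * (√2 * r))) ≤ c * triad w1 w3 w5 w7 :=
    calc -(|c| * (A / 2 * (√2 * r)))
        ≤ -(|c| * |triad w1 w3 w5 w7|) :=
          neg_le_neg (mul_le_mul_of_nonneg_left ((abs_triad_le _ _ _ _).trans hprod) (abs_nonneg c))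
      _ = -|c * triad w1 w3 w5 w7| := by rw [abs_mul]
      _ ≤ c * triad w1 w3 w5 w7 := neg_abs_le _
  have hgain : 0 ≤ (gain1 ν δ * ‖w1‖ ^ 2 + gain3 ν δ * ‖w3‖ ^ 2) * (‖w5‖ ^ 2 + ‖w7‖ ^ 2) := by
    have := gain1_nonneg (δ := δ) hν; have := gain3_nonneg (δ := δ) hν; positivity
  linear_combination hdiss + htriad + hgain

theorem abs_one_sub_sq_div_le {η : ℝ} (hδ : 0 < δ) (hδ4 : δ ≤ 4) (hη : |δ ^ 2 - 1| ≤ η) :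
    |(1 - δ ^ 2) / δ| ≤ 4 * (η / δ ^ 2) := by
  rw [abs_div, abs_of_pos hδ, abs_sub_comm, show 4 * (η / δ ^ 2) = 4 * η / δ / δ by
    field_simp, div_le_div_iff_of_pos_right hδ, le_div_iff₀ hδ]
  nlinarith [abs_nonneg (δ ^ 2 - 1)]

section Dynamics

variable {ν δ : ℝ} {ω1 ω3 ω5 ω7 : ℝ → ℂ}

theorem hasDerivAt_lowEnergy
    (h1 : ∀ t, 0 ≤ t → HasDerivAt ω1 (rhs1 ν δ (ω1 t) (ω3 t) (ω5 t) (ω7 t)) t)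
    (h3 : ∀ t, 0 ≤ t → HasDerivAt ω3 (rhs3 ν δ (ω1 t) (ω3 t) (ω5 t) (ω7 t)) t)
    {t : ℝ} (ht : 0 ≤ t) :
    HasDerivAt (fun s => ‖ω1 s‖ ^ 2 + ‖ω3 s‖ ^ 2)
      (2 * lowRate ν δ (ω1 t) (ω3 t) (ω5 t) (ω7 t)) t :=
  ((h1 t ht).norm_sq.add (h3 t ht).norm_sq).congr_deriv <| by
    simp only [Complex.inner, lowRate]; ring

theorem hasDerivAt_highEnergy
    (h5 : ∀ t, 0 ≤ t → HasDerivAt ω5 (rhs5 ν δ (ω1 t) (ω3 t) (ω5 t)) t)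
    (h7 : ∀ t, 0 ≤ t → HasDerivAt ω7 (rhs7 ν δ (ω1 t) (ω3 t) (ω7 t)) t)
    {t : ℝ} (ht : 0 ≤ t) :
    HasDerivAt (fun s => ‖ω5 s‖ ^ 2 + ‖ω7 s‖ ^ 2)
      (2 * highRate ν δ (ω1 t) (ω3 t) (ω5 t) (ω7 t)) t :=
  ((h5 t ht).norm_sq.add (h7 t ht).norm_sq).congr_deriv <| by
    simp only [Complex.inner, highRate]; ring

theorem highEnergy_le (hν : 0 < ν) (hδ : δ ≠ 0)
    (h1 : ∀ t, 0 ≤ t → HasDerivAt ω1 (rhs1 ν δ (ω1 t) (ω3 t) (ω5 t) (ω7 t)) t)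
    (h3 : ∀ t, 0 ≤ t → HasDerivAt ω3 (rhs3 ν δ (ω1 t) (ω3 t) (ω5 t) (ω7 t)) t)
    (h5 : ∀ t, 0 ≤ t → HasDerivAt ω5 (rhs5 ν δ (ω1 t) (ω3 t) (ω5 t)) t)
    (h7 : ∀ t, 0 ≤ t → HasDerivAt ω7 (rhs7 ν δ (ω1 t) (ω3 t) (ω7 t)) t)
    {t : ℝ} (ht : 0 ≤ t) :
    ‖ω5 t‖ ^ 2 + ‖ω7 t‖ ^ 2 ≤ (‖ω1 0‖ ^ 2 + ‖ω3 0‖ ^ 2) + (‖ω5 0‖ ^ 2 + ‖ω7 0‖ ^ 2) := by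
  have hE : ∀ s, 0 ≤ s → HasDerivAt
      (fun s => (‖ω1 s‖ ^ 2 + ‖ω3 s‖ ^ 2) + (‖ω5 s‖ ^ 2 + ‖ω7 s‖ ^ 2))
      (2 * lowRate ν δ (ω1 s) (ω3 s) (ω5 s) (ω7 s)
        + 2 * highRate ν δ (ω1 s) (ω3 s) (ω5 s) (ω7 s)) s := fun s hs =>
    (hasDerivAt_lowEnergy h1 h3 hs).add (hasDerivAt_highEnergy h5 h7 hs)
  have hanti := antitoneOn_of_hasDerivWithinAt_nonpos (convex_Ici 0)
    (fun s hs => (hE s hs).continuousAt.continuousWithinAt)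
    (fun s hs => (hE s (interior_subset hs)).hasDerivWithinAt)
    (fun s _ => by linarith [lowRate_add_highRate_nonpos hν hδ (ω1 s) (ω3 s) (ω5 s) (ω7 s)])
  have := hanti Set.self_mem_Ici ht ht
  dsimp only at this
  linarith [sq_nonneg ‖ω1 t‖, sq_nonneg ‖ω3 t‖]

end Dynamics

end AsymmetricCenterManifold

end

open AsymmetricCenterManifold

/-- For the asymmetric center-manifold system with ν > 0,
δ ∈ (√(2/3), √(3/2)) and |δ² − 1| < η, the low-mode energy A(t) = |ω1|² + |ω3|² satisfies
A(t) ≥ A0 exp[−(2ν max(1,1/δ²) + 4√2 (η/δ²) √(A0+B0)) t] for all t ≥ 0; consequently,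
with K₂ = 2 max(1,1/δ²) + 6√2 √(A0+B0), A(t) ≥ A0 e^{−K₂} for 0 ≤ t ≤ min(1/ν, 1/η). -/
theorem A_lower_bound_asymmetric
    (ν δ η : ℝ) (hν : 0 < ν) (hη : 0 < η)
    (hδ1 : Real.sqrt (2 / 3) < δ) (hδ2 : δ < Real.sqrt (3 / 2))
    (hδη : |δ ^ 2 - 1| < η)
    (ω1 ω3 ω5 ω7 : ℝ → ℂ)
    (h1 : ∀ t : ℝ, 0 ≤ t → HasDerivAt ω1
      (-((ν / δ ^ 2 : ℝ) : ℂ) * ω1 t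
        + ((1 / (δ * (1 + δ ^ 2)) : ℝ) : ℂ) * (ω3 t * ω7 t - (starRingEnd ℂ) (ω3 t) * ω5 t)
        + ((3 * δ ^ 6 / (2 * ν * (4 + δ ^ 2) * (1 + δ ^ 2) ^ 2) : ℝ) : ℂ) * ω1 t
            * ((‖ω5 t‖ ^ 2 + ‖ω7 t‖ ^ 2 : ℝ) : ℂ)) t)
    (h3 : ∀ t : ℝ, 0 ≤ t → HasDerivAt ω3
      (-(ν : ℂ) * ω3 t
        + ((δ ^ 3 / (1 + δ ^ 2) : ℝ) : ℂ) * ((starRingEnd ℂ) (ω1 t) * ω5 t - ω1 t * (starRingEnd ℂ) (ω7 t))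
        + ((3 * δ ^ 2 / (2 * ν * (1 + 4 * δ ^ 2) * (1 + δ ^ 2) ^ 2) : ℝ) : ℂ) * ω3 t
            * ((‖ω5 t‖ ^ 2 + ‖ω7 t‖ ^ 2 : ℝ) : ℂ)) t)
    (h5 : ∀ t : ℝ, 0 ≤ t → HasDerivAt ω5
      (-((ν * (1 + δ ^ 2) / δ ^ 2 : ℝ) : ℂ) * ω5 t
        - (((δ ^ 2 - 1) / δ : ℝ) : ℂ) * ω1 t * ω3 t
        - ((δ ^ 6 * (3 + δ ^ 2) / (2 * ν * (4 + δ ^ 2) * (1 + δ ^ 2)) : ℝ) : ℂ) * ω5 t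
            * ((‖ω1 t‖ ^ 2 : ℝ) : ℂ)
        - (((1 + 3 * δ ^ 2) / (2 * ν * δ ^ 2 * (1 + 4 * δ ^ 2) * (1 + δ ^ 2)) : ℝ) : ℂ) * ω5 t
            * ((‖ω3 t‖ ^ 2 : ℝ) : ℂ)) t)
    (h7 : ∀ t : ℝ, 0 ≤ t → HasDerivAt ω7
      (-((ν * (1 + δ ^ 2) / δ ^ 2 : ℝ) : ℂ) * ω7 t
        + (((δ ^ 2 - 1) / δ : ℝ) : ℂ) * ω1 t * (starRingEnd ℂ) (ω3 t)
        - ((δ ^ 6 * (3 + δ ^ 2) / (2 * ν * (4 + δ ^ 2) * (1 + δ ^ 2)) : ℝ) : ℂ) * ω7 t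
            * ((‖ω1 t‖ ^ 2 : ℝ) : ℂ)
        - (((1 + 3 * δ ^ 2) / (2 * ν * δ ^ 2 * (1 + 4 * δ ^ 2) * (1 + δ ^ 2)) : ℝ) : ℂ) * ω7 t
            * ((‖ω3 t‖ ^ 2 : ℝ) : ℂ)) t)
    (A0 B0 : ℝ)
    (hA0 : ‖ω1 0‖ ^ 2 + ‖ω3 0‖ ^ 2 = A0)
    (hB0 : ‖ω5 0‖ ^ 2 + ‖ω7 0‖ ^ 2 = B0) :
    (∀ t : ℝ, 0 ≤ t →
      A0 * Real.exp (-(2 * ν * max 1 (1 / δ ^ 2)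
            + 4 * Real.sqrt 2 * (η / δ ^ 2) * Real.sqrt (A0 + B0)) * t)
        ≤ ‖ω1 t‖ ^ 2 + ‖ω3 t‖ ^ 2)
      ∧ (∀ t : ℝ, 0 ≤ t → t ≤ min (1 / ν) (1 / η) →
          A0 * Real.exp (-(2 * max 1 (1 / δ ^ 2) + 6 * Real.sqrt 2 * Real.sqrt (A0 + B0)))
            ≤ ‖ω1 t‖ ^ 2 + ‖ω3 t‖ ^ 2) := by
  have hδ0 : 0 < δ := (sqrt_pos.2 (by norm_num)).trans hδ1
  have hδ_sq_lo : 2 / 3 < δ ^ 2 := (sqrt_lt' hδ0).1 hδ1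
  have hδ_sq_hi : δ ^ 2 < 3 / 2 := (lt_sqrt hδ0.le).1 hδ2
  have hA0_nonneg : 0 ≤ A0 := hA0 ▸ by positivity
  set M := max 1 (1 / δ ^ 2)
  set R := √(A0 + B0)
  set K := 2 * ν * M + 4 * √2 * (η / δ ^ 2) * R
  have hcoef := abs_one_sub_sq_div_le hδ0 (by nlinarith) hδη.le
  have hrate : ∀ t, 0 ≤ t → -K * (‖ω1 t‖ ^ 2 + ‖ω3 t‖ ^ 2)
      ≤ 2 * lowRate ν δ (ω1 t) (ω3 t) (ω5 t) (ω7 t) := by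
    intro t ht
    have hB : √(‖ω5 t‖ ^ 2 + ‖ω7 t‖ ^ 2) ≤ R :=
      sqrt_le_sqrt (hA0 ▸ hB0 ▸ highEnergy_le hν hδ0.ne' h1 h3 h5 h7 ht)
    have hcB := mul_le_mul_of_nonneg_right (mul_le_mul hcoef hB (sqrt_nonneg _) (by positivity))
      (by positivity : 0 ≤ ‖ω1 t‖ ^ 2 + ‖ω3 t‖ ^ 2)
    linear_combination 2 * neg_mul_le_lowRate hν.le hδ0.ne' (ω1 t) (ω3 t) (ω5 t) (ω7 t)
      + √2 * hcB
  have hlower : ∀ t, 0 ≤ t → A0 * exp (-K * t) ≤ ‖ω1 t‖ ^ 2 + ‖ω3 t‖ ^ 2 := fun t ht =>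
    hA0 ▸ mul_exp_neg_mul_le_of_hasDerivAt (fun s hs => hasDerivAt_lowEnergy h1 h3 hs) hrate ht
  refine ⟨hlower, fun t ht htm => le_trans ?_ (hlower t ht)⟩
  have htν : t * ν ≤ 1 := (le_div_iff₀ hν).1 (htm.trans (min_le_left _ _))
  have hηt : η / δ ^ 2 * t ≤ 3 / 2 := by
    have htη : t * η ≤ 1 := (le_div_iff₀ hη).1 (htm.trans (min_le_right _ _))
    rw [div_mul_eq_mul_div, div_le_iff₀ (by positivity)]; nlinarith
  have hKt : K * t ≤ 2 * M + 6 * √2 * R := by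
    nlinarith [mul_le_mul_of_nonneg_left hηt (by positivity : 0 ≤ 4 * √2 * R),
      le_max_left 1 (1 / δ ^ 2)]
  exact mul_le_mul_of_nonneg_left (exp_le_exp.2 (by linarith)) hA0_nonneg
end

section
/- Let ω1, ω3, ω5, ω7 solve the asymmetric center-manifold system with parameters ν > 0 and δ ∈ (√(2/3), √(3/2)), let η > 0 satisfy |δ² − 1| < η, and set A(t) = |ω1(t)|² + |ω3(t)|², B(t) = |ω5(t)|² + |ω7(t)|². Then B is differentiable and satisfies the differential inequality B'(t) ≤ −2ν((1+δ²)/δ²) B(t) + 4√2 (η/δ) A(t) √(B(t)) − (D₀/ν) A(t) B(t) for all t ≥ 0, where D₀ = min( (1+3δ²)/(δ²(1+δ²)(1+4δ²)), δ⁶(3+δ²)/((1+δ²)(4+δ²)) ). -/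
/-!
Differentiating, `B' = 2 Re (ω5' conj ω5) + 2 Re (ω7' conj ω7)`. The linear and cubic terms of the
`ω5`, `ω7` equations are real multiples of `ω5`, `ω7` and contribute
`-2 (ν(1+δ²)/δ² + a |ω1|² + b |ω3|²) B`, with `a`, `b` the coefficients of the cubic terms; the
cubic part is at most `-(D₀/ν) A B` because `D₀/ν = min (2b) (2a)`. The quadratic coupling terms
have modulus `|δ² - 1|/δ · |ω1| |ω3|`, so by Cauchy–Schwarz, `2 |ω1| |ω3| ≤ A` and
`|ω5| + |ω7| ≤ √2 √B` they contribute at most `√2 (η/δ) A √B`.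
-/

theorem HasDerivAt.exists_hasDerivAt_norm_sq_le {F : Type*} [NormedAddCommGroup F]
    [InnerProductSpace ℝ F] {f : ℝ → F} {c t : ℝ} {g : F}
    (hf : HasDerivAt f (-c • f t + g) t) :
    ∃ d, HasDerivAt (fun s => ‖f s‖ ^ 2) d t ∧ d ≤ -2 * c * ‖f t‖ ^ 2 + 2 * (‖f t‖ * ‖g‖) := by
  refine ⟨_, hf.norm_sq, ?_⟩
  rw [inner_add_right, real_inner_smul_right, real_inner_self_eq_norm_sq]
  linarith [real_inner_le_norm (f t) g]

theorem exists_hasDerivAt_norm_sq_add_norm_sq_le {u v : ℝ → ℂ} {t c a b r s : ℝ} {g h : ℂ}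
    (hu : HasDerivAt u (-(c : ℂ) * u t - g - (a : ℂ) * u t * (r : ℂ) - (b : ℂ) * u t * (s : ℂ)) t)
    (hv : HasDerivAt v (-(c : ℂ) * v t + h - (a : ℂ) * v t * (r : ℂ) - (b : ℂ) * v t * (s : ℂ)) t) :
    ∃ d, HasDerivAt (fun τ => ‖u τ‖ ^ 2 + ‖v τ‖ ^ 2) d t ∧
      d ≤ -2 * (c + a * r + b * s) * (‖u t‖ ^ 2 + ‖v t‖ ^ 2) + 2 * (‖u t‖ * ‖g‖ + ‖v t‖ * ‖h‖) := by
  have hu' : HasDerivAt u (-(c + a * r + b * s) • u t + -g) t :=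
    hu.congr_deriv (by rw [Complex.real_smul]; push_cast; ring)
  have hv' : HasDerivAt v (-(c + a * r + b * s) • v t + h) t :=
    hv.congr_deriv (by rw [Complex.real_smul]; push_cast; ring)
  obtain ⟨du, hdu, hleu⟩ := hu'.exists_hasDerivAt_norm_sq_le
  obtain ⟨dv, hdv, hlev⟩ := hv'.exists_hasDerivAt_norm_sq_le
  refine ⟨du + dv, hdu.add hdv, ?_⟩
  rw [norm_neg] at hleu
  linarith

theorem add_le_sqrt_two_mul_sqrt_sq_add_sq_s10 {u v : ℝ} (hu : 0 ≤ u) (hv : 0 ≤ v) :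
    u + v ≤ √2 * √(u ^ 2 + v ^ 2) := by
  rw [← Real.sqrt_mul zero_le_two, Real.le_sqrt (by positivity) (by positivity)]
  nlinarith [sq_nonneg (u - v)]

theorem two_mul_mul_mul_add_le {x y u v : ℝ} (hu : 0 ≤ u) (hv : 0 ≤ v) :
    2 * x * y * (u + v) ≤ √2 * (x ^ 2 + y ^ 2) * √(u ^ 2 + v ^ 2) := by
  have hxy : 2 * x * y ≤ x ^ 2 + y ^ 2 := by nlinarith [sq_nonneg (x - y)]
  calc 2 * x * y * (u + v) ≤ (x ^ 2 + y ^ 2) * (√2 * √(u ^ 2 + v ^ 2)) :=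
        mul_le_mul hxy (add_le_sqrt_two_mul_sqrt_sq_add_sq_s10 hu hv) (by positivity) (by positivity)
    _ = √2 * (x ^ 2 + y ^ 2) * √(u ^ 2 + v ^ 2) := by ring

theorem min_mul_add_le {p q x y : ℝ} (hx : 0 ≤ x) (hy : 0 ≤ y) :
    min p q * (x + y) ≤ p * x + q * y := by
  nlinarith [min_le_left p q, min_le_right p q]

theorem min_div_mul_add_le_cubic_damping {ν δ x y : ℝ} (hν : 0 < ν) (hδ : 0 < δ)
    (hx : 0 ≤ x) (hy : 0 ≤ y) :
    min ((1 + 3 * δ ^ 2) / (δ ^ 2 * (1 + δ ^ 2) * (1 + 4 * δ ^ 2)))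
        (δ ^ 6 * (3 + δ ^ 2) / ((1 + δ ^ 2) * (4 + δ ^ 2))) / ν * (x + y) ≤
      2 * (δ ^ 6 * (3 + δ ^ 2) / (2 * ν * (4 + δ ^ 2) * (1 + δ ^ 2)) * x
        + (1 + 3 * δ ^ 2) / (2 * ν * δ ^ 2 * (1 + 4 * δ ^ 2) * (1 + δ ^ 2)) * y) := by
  have h3 : (1 + 3 * δ ^ 2) / (δ ^ 2 * (1 + δ ^ 2) * (1 + 4 * δ ^ 2)) / ν
      = 2 * ((1 + 3 * δ ^ 2) / (2 * ν * δ ^ 2 * (1 + 4 * δ ^ 2) * (1 + δ ^ 2))) := by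
    field_simp
  have h1 : δ ^ 6 * (3 + δ ^ 2) / ((1 + δ ^ 2) * (4 + δ ^ 2)) / ν
      = 2 * (δ ^ 6 * (3 + δ ^ 2) / (2 * ν * (4 + δ ^ 2) * (1 + δ ^ 2))) := by
    field_simp
  rw [← min_div_div_right hν.le, h3, h1, add_comm x]
  exact (min_mul_add_le hy hx).trans_eq (by ring)

theorem B_differential_inequality_general
    (ν δ η : ℝ) (hν : 0 < ν)
    (hδ1 : Real.sqrt (2 / 3) < δ)
    (hδη : |δ ^ 2 - 1| < η)
    (ω1 ω3 ω5 ω7 : ℝ → ℂ)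
    (h5 : ∀ t : ℝ, 0 ≤ t → HasDerivAt ω5
      (-((ν * (1 + δ ^ 2) / δ ^ 2 : ℝ) : ℂ) * ω5 t
        - (((δ ^ 2 - 1) / δ : ℝ) : ℂ) * ω1 t * ω3 t
        - ((δ ^ 6 * (3 + δ ^ 2) / (2 * ν * (4 + δ ^ 2) * (1 + δ ^ 2)) : ℝ) : ℂ) * ω5 t
            * ((‖ω1 t‖ ^ 2 : ℝ) : ℂ)
        - (((1 + 3 * δ ^ 2) / (2 * ν * δ ^ 2 * (1 + 4 * δ ^ 2) * (1 + δ ^ 2)) : ℝ) : ℂ) * ω5 t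
            * ((‖ω3 t‖ ^ 2 : ℝ) : ℂ)) t)
    (h7 : ∀ t : ℝ, 0 ≤ t → HasDerivAt ω7
      (-((ν * (1 + δ ^ 2) / δ ^ 2 : ℝ) : ℂ) * ω7 t
        + (((δ ^ 2 - 1) / δ : ℝ) : ℂ) * ω1 t * (starRingEnd ℂ) (ω3 t)
        - ((δ ^ 6 * (3 + δ ^ 2) / (2 * ν * (4 + δ ^ 2) * (1 + δ ^ 2)) : ℝ) : ℂ) * ω7 t
            * ((‖ω1 t‖ ^ 2 : ℝ) : ℂ)
        - (((1 + 3 * δ ^ 2) / (2 * ν * δ ^ 2 * (1 + 4 * δ ^ 2) * (1 + δ ^ 2)) : ℝ) : ℂ) * ω7 t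
            * ((‖ω3 t‖ ^ 2 : ℝ) : ℂ)) t)
    :
    ∀ t : ℝ, 0 ≤ t →
      ∃ b' : ℝ,
        HasDerivAt (fun s => ‖ω5 s‖ ^ 2 + ‖ω7 s‖ ^ 2) b' t
        ∧ b' ≤ -2 * ν * ((1 + δ ^ 2) / δ ^ 2) * (‖ω5 t‖ ^ 2 + ‖ω7 t‖ ^ 2)
            + 4 * Real.sqrt 2 * (η / δ) * (‖ω1 t‖ ^ 2 + ‖ω3 t‖ ^ 2)
                * Real.sqrt (‖ω5 t‖ ^ 2 + ‖ω7 t‖ ^ 2)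
            - (min ((1 + 3 * δ ^ 2) / (δ ^ 2 * (1 + δ ^ 2) * (1 + 4 * δ ^ 2)))
                  (δ ^ 6 * (3 + δ ^ 2) / ((1 + δ ^ 2) * (4 + δ ^ 2))) / ν)
                * (‖ω1 t‖ ^ 2 + ‖ω3 t‖ ^ 2)
                * (‖ω5 t‖ ^ 2 + ‖ω7 t‖ ^ 2) := by
  intro t ht
  have hδ : 0 < δ := (Real.sqrt_nonneg _).trans_lt hδ1
  obtain ⟨d, hd, hle⟩ := exists_hasDerivAt_norm_sq_add_norm_sq_le (h5 t ht) (h7 t ht)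
  refine ⟨d, hd, ?_⟩
  simp only [norm_mul, Complex.norm_real, Real.norm_eq_abs, Complex.norm_conj] at hle
  have hk : |(δ ^ 2 - 1) / δ| ≤ 4 * (η / δ) := by
    have h : |(δ ^ 2 - 1) / δ| ≤ η / δ := by
      rw [abs_div, abs_of_pos hδ]
      gcongr
    linarith [(abs_nonneg _).trans h]
  have coupling := mul_le_mul hk
    (two_mul_mul_mul_add_le (x := ‖ω1 t‖) (y := ‖ω3 t‖) (norm_nonneg (ω5 t)) (norm_nonneg (ω7 t)))
    (by positivity) ((abs_nonneg _).trans hk)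
  have damping := mul_le_mul_of_nonneg_right
    (min_div_mul_add_le_cubic_damping hν hδ (sq_nonneg ‖ω1 t‖) (sq_nonneg ‖ω3 t‖))
    (by positivity : 0 ≤ ‖ω5 t‖ ^ 2 + ‖ω7 t‖ ^ 2)
  rw [mul_div_assoc] at hle
  linarith

/-- For the asymmetric center-manifold system with ν > 0,
δ ∈ (√(2/3), √(3/2)) and |δ² − 1| < η, the high-mode energy B(t) = |ω5|² + |ω7|² is
differentiable and satisfies B' ≤ −2ν((1+δ²)/δ²)B + 4√2 (η/δ) A √B − (D₀/ν) A B,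
where D₀ = min((1+3δ²)/(δ²(1+δ²)(1+4δ²)), δ⁶(3+δ²)/((1+δ²)(4+δ²))). -/
theorem B_differential_inequality
    (ν δ η : ℝ) (hν : 0 < ν) (hη : 0 < η)
    (hδ1 : Real.sqrt (2 / 3) < δ) (hδ2 : δ < Real.sqrt (3 / 2))
    (hδη : |δ ^ 2 - 1| < η)
    (ω1 ω3 ω5 ω7 : ℝ → ℂ)
    (h1 : ∀ t : ℝ, 0 ≤ t → HasDerivAt ω1
      (-((ν / δ ^ 2 : ℝ) : ℂ) * ω1 t
        + ((1 / (δ * (1 + δ ^ 2)) : ℝ) : ℂ) * (ω3 t * ω7 t - (starRingEnd ℂ) (ω3 t) * ω5 t)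
        + ((3 * δ ^ 6 / (2 * ν * (4 + δ ^ 2) * (1 + δ ^ 2) ^ 2) : ℝ) : ℂ) * ω1 t
            * ((‖ω5 t‖ ^ 2 + ‖ω7 t‖ ^ 2 : ℝ) : ℂ)) t)
    (h3 : ∀ t : ℝ, 0 ≤ t → HasDerivAt ω3
      (-(ν : ℂ) * ω3 t
        + ((δ ^ 3 / (1 + δ ^ 2) : ℝ) : ℂ) * ((starRingEnd ℂ) (ω1 t) * ω5 t - ω1 t * (starRingEnd ℂ) (ω7 t))
        + ((3 * δ ^ 2 / (2 * ν * (1 + 4 * δ ^ 2) * (1 + δ ^ 2) ^ 2) : ℝ) : ℂ) * ω3 t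
            * ((‖ω5 t‖ ^ 2 + ‖ω7 t‖ ^ 2 : ℝ) : ℂ)) t)
    (h5 : ∀ t : ℝ, 0 ≤ t → HasDerivAt ω5
      (-((ν * (1 + δ ^ 2) / δ ^ 2 : ℝ) : ℂ) * ω5 t
        - (((δ ^ 2 - 1) / δ : ℝ) : ℂ) * ω1 t * ω3 t
        - ((δ ^ 6 * (3 + δ ^ 2) / (2 * ν * (4 + δ ^ 2) * (1 + δ ^ 2)) : ℝ) : ℂ) * ω5 t
            * ((‖ω1 t‖ ^ 2 : ℝ) : ℂ)
        - (((1 + 3 * δ ^ 2) / (2 * ν * δ ^ 2 * (1 + 4 * δ ^ 2) * (1 + δ ^ 2)) : ℝ) : ℂ) * ω5 t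
            * ((‖ω3 t‖ ^ 2 : ℝ) : ℂ)) t)
    (h7 : ∀ t : ℝ, 0 ≤ t → HasDerivAt ω7
      (-((ν * (1 + δ ^ 2) / δ ^ 2 : ℝ) : ℂ) * ω7 t
        + (((δ ^ 2 - 1) / δ : ℝ) : ℂ) * ω1 t * (starRingEnd ℂ) (ω3 t)
        - ((δ ^ 6 * (3 + δ ^ 2) / (2 * ν * (4 + δ ^ 2) * (1 + δ ^ 2)) : ℝ) : ℂ) * ω7 t
            * ((‖ω1 t‖ ^ 2 : ℝ) : ℂ)
        - (((1 + 3 * δ ^ 2) / (2 * ν * δ ^ 2 * (1 + 4 * δ ^ 2) * (1 + δ ^ 2)) : ℝ) : ℂ) * ω7 t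
            * ((‖ω3 t‖ ^ 2 : ℝ) : ℂ)) t)
    :
    ∀ t : ℝ, 0 ≤ t →
      ∃ b' : ℝ,
        HasDerivAt (fun s => ‖ω5 s‖ ^ 2 + ‖ω7 s‖ ^ 2) b' t
        ∧ b' ≤ -2 * ν * ((1 + δ ^ 2) / δ ^ 2) * (‖ω5 t‖ ^ 2 + ‖ω7 t‖ ^ 2)
            + 4 * Real.sqrt 2 * (η / δ) * (‖ω1 t‖ ^ 2 + ‖ω3 t‖ ^ 2)
                * Real.sqrt (‖ω5 t‖ ^ 2 + ‖ω7 t‖ ^ 2)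
            - (min ((1 + 3 * δ ^ 2) / (δ ^ 2 * (1 + δ ^ 2) * (1 + 4 * δ ^ 2)))
                  (δ ^ 6 * (3 + δ ^ 2) / ((1 + δ ^ 2) * (4 + δ ^ 2))) / ν)
                * (‖ω1 t‖ ^ 2 + ‖ω3 t‖ ^ 2)
                * (‖ω5 t‖ ^ 2 + ‖ω7 t‖ ^ 2) :=
  B_differential_inequality_general ν δ η hν hδ1 hδη ω1 ω3 ω5 ω7 h5 h7
end

section
/- Selection of the x-bar state for δ > 1: there exists η₀ > 0 such that for any fixed η ∈ (0, η₀), any fixed δ ∈ (1, √(3/2)) with |δ² − 1| < η, and any fixed initial values A0 > 0, B0 > 0, there exist U* > 0 and ν* > 0 such that for all 0 < ν ≤ ν* the following holds: if ω1, ω3, ω5, ω7 solve the asymmetric center-manifold system with viscosity ν, with |ω1(0)|² + |ω3(0)|² = A0, |ω5(0)|² + |ω7(0)|² = B0, with ω1(t) ≠ 0 for all t ≥ 0, and if U(0) ≤ U* where U(t) = |ω3(t)|²/|ω1(t)|², then there exists M₂ > 0 such that U(t) ≤ M₂ e^{−γ t} for all t ≥ 0, where γ = 2ν(1 − 1/δ²)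 > 0; in particular U(t) → 0 as t → ∞. -/
/-!
Write `a = |ω₁|²`, `b = |ω₃|²`, `S = |ω₅|² + |ω₇|²`. These energies obey a closed system of
balance laws in which the modes exchange energy through a single real transfer term `Z`, with
`Z² ≤ 2abS`. With the weights `δ⁴/(δ⁴-1)` and `1/(δ⁴-1)` the transfer cancels: the energy
`b + δ⁴/(δ⁴-1) S` decays at rate `2ν`, while `a - S/(δ⁴-1)` decays at most at rate `2ν/δ²`.
The latter may be negative at `t = 0`, but on a short interval `[0, T]`, with `T` independent of
`ν`, `a` stays above `A₀/8` (it starts above `A₀/2` as `U(0) ≤ 1`), so the damping of `S`, which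
is of size `1/ν`, makes `S(T)` as small as needed once `ν` is small. From `T` on,
`a ≥ a - S/(δ⁴-1) > 0`, and `U = b/a` decays at rate `2ν - 2ν/δ² = γ`.
-/

open Set Filter Topology Real ComplexConjugate

theorem le_mul_exp_of_hasDerivAt_le_s13 {f f' : ℝ → ℝ} {c t₀ t₁ : ℝ} (h : t₀ ≤ t₁)
    (hf : ∀ t ∈ Icc t₀ t₁, HasDerivAt f (f' t) t) (hf' : ∀ t ∈ Icc t₀ t₁, f' t ≤ c * f t) :
    f t₁ ≤ f t₀ * exp (c * (t₁ - t₀)) := by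
  have hg : ∀ t ∈ Icc t₀ t₁,
      HasDerivAt (fun s => f s * exp (-c * s)) ((f' t - c * f t) * exp (-c * t)) t := by
    intro t ht
    have he : HasDerivAt (fun s => exp (-c * s)) (exp (-c * t) * -c) t := by
      simpa using ((hasDerivAt_id t).const_mul (-c)).exp
    exact ((hf t ht).fun_mul he).congr_deriv (by ring)
  have hanti : AntitoneOn (fun s => f s * exp (-c * s)) (Icc t₀ t₁) := by
    refine antitoneOn_of_hasDerivWithinAt_nonpos (convex_Icc t₀ t₁)
      (fun t ht => (hg t ht).continuousAt.continuousWithinAt)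
      (fun t ht => (hg t (interior_subset ht)).hasDerivWithinAt) fun t ht => ?_
    have ht' := interior_subset ht
    exact mul_nonpos_of_nonpos_of_nonneg (by linarith [hf' t ht']) (exp_nonneg _)
  have := hanti (left_mem_Icc.2 h) (right_mem_Icc.2 h) h
  calc f t₁ = f t₁ * exp (-c * t₁) * exp (c * t₁) := by rw [mul_assoc, ← exp_add]; simp
    _ ≤ f t₀ * exp (-c * t₀) * exp (c * t₁) := by gcongr
    _ = f t₀ * exp (c * (t₁ - t₀)) := by rw [mul_assoc, ← exp_add]; ring_nf

theorem mul_exp_le_of_le_hasDerivAt_s13 {f f' : ℝ → ℝ} {c t₀ t₁ : ℝ} (h : t₀ ≤ t₁)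
    (hf : ∀ t ∈ Icc t₀ t₁, HasDerivAt f (f' t) t) (hf' : ∀ t ∈ Icc t₀ t₁, c * f t ≤ f' t) :
    f t₀ * exp (c * (t₁ - t₀)) ≤ f t₁ := by
  have := le_mul_exp_of_hasDerivAt_le_s13 (f := -f) h (fun t ht => (hf t ht).neg)
    fun t ht => by simpa using hf' t ht
  simpa using this

theorem two_mul_abs_le_add_of_sq_le_mul {x y z : ℝ} (hx : 0 ≤ x) (hy : 0 ≤ y)
    (h : z ^ 2 ≤ x * y) : 2 * |z| ≤ x + y :=
  (pow_le_pow_iff_left₀ (by positivity) (by positivity) two_ne_zero).1 <| by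
    nlinarith [sq_abs z, sq_nonneg (x - y)]

theorem tendsto_zero_of_le_mul_exp {f : ℝ → ℝ} {M γ : ℝ} (hγ : 0 < γ) (hf₀ : ∀ t, 0 ≤ f t)
    (hf : ∀ t, 0 ≤ t → f t ≤ M * exp (-γ * t)) : Tendsto f atTop (𝓝 0) := by
  have : Tendsto (fun t => M * exp (-γ * t)) atTop (𝓝 0) := by
    simpa using (tendsto_exp_atBot.comp
      (tendsto_id.const_mul_atTop_of_neg (neg_neg_of_pos hγ))).const_mul M
  exact tendsto_of_tendsto_of_tendsto_of_le_of_le' tendsto_const_nhds this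
    (Eventually.of_forall hf₀) ((eventually_ge_atTop 0).mono hf)

namespace CenterManifold

def transfer (z₁ z₃ z₅ z₇ : ℂ) : ℝ :=
  (z₁ * z₃ * conj z₅).re - (z₁ * conj z₃ * conj z₇).re

theorem sq_transfer_le (z₁ z₃ z₅ z₇ : ℂ) :
    transfer z₁ z₃ z₅ z₇ ^ 2 ≤ 2 * ‖z₁‖ ^ 2 * ‖z₃‖ ^ 2 * (‖z₅‖ ^ 2 + ‖z₇‖ ^ 2) := by
  have h₅ := Complex.abs_re_le_norm (z₁ * z₃ * conj z₅)
  have h₇ := Complex.abs_re_le_norm (z₁ * conj z₃ * conj z₇)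
  simp only [norm_mul, Complex.norm_conj] at h₅ h₇
  have habs : |transfer z₁ z₃ z₅ z₇| ≤ ‖z₁‖ * ‖z₃‖ * (‖z₅‖ + ‖z₇‖) :=
    (abs_sub _ _).trans (by linarith)
  calc transfer z₁ z₃ z₅ z₇ ^ 2 ≤ (‖z₁‖ * ‖z₃‖ * (‖z₅‖ + ‖z₇‖)) ^ 2 :=
        sq_le_sq' (abs_le.1 habs).1 (abs_le.1 habs).2
    _ ≤ _ := by nlinarith [sq_nonneg (‖z₅‖ - ‖z₇‖), sq_nonneg (‖z₁‖ * ‖z₃‖)]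

section ModeEnergy

variable (z₁ z₃ z₅ z₇ : ℂ) (p q r s : ℝ)

theorem two_inner_rhs₁ :
    2 * inner ℝ z₁ (-(p : ℂ) * z₁ + (q : ℂ) * (z₃ * z₇ - conj z₃ * z₅) + (r : ℂ) * z₁ * (s : ℂ))
      = -2 * p * ‖z₁‖ ^ 2 - 2 * q * transfer z₁ z₃ z₅ z₇ + 2 * r * ‖z₁‖ ^ 2 * s := by
  simp only [Complex.inner, transfer, Complex.sq_norm, Complex.normSq_apply, Complex.mul_re,
    Complex.mul_im, Complex.add_re, Complex.add_im, Complex.sub_re, Complex.sub_im,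
    Complex.neg_re, Complex.neg_im, Complex.conj_re, Complex.conj_im, Complex.ofReal_re,
    Complex.ofReal_im]
  ring

theorem two_inner_rhs₃ :
    2 * inner ℝ z₃
        (-(p : ℂ) * z₃ + (q : ℂ) * (conj z₁ * z₅ - z₁ * conj z₇) + (r : ℂ) * z₃ * (s : ℂ))
      = -2 * p * ‖z₃‖ ^ 2 + 2 * q * transfer z₁ z₃ z₅ z₇ + 2 * r * ‖z₃‖ ^ 2 * s := by
  simp only [Complex.inner, transfer, Complex.sq_norm, Complex.normSq_apply, Complex.mul_re,
    Complex.mul_im, Complex.add_re, Complex.add_im, Complex.sub_re, Complex.sub_im,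
    Complex.neg_re, Complex.neg_im, Complex.conj_re, Complex.conj_im, Complex.ofReal_re,
    Complex.ofReal_im]
  ring

theorem two_inner_rhs₅_add_two_inner_rhs₇ (m d D D' x y : ℝ) :
    2 * inner ℝ z₅ (-(m : ℂ) * z₅ - (d : ℂ) * z₁ * z₃ - (D : ℂ) * z₅ * (x : ℂ)
        - (D' : ℂ) * z₅ * (y : ℂ))
      + 2 * inner ℝ z₇ (-(m : ℂ) * z₇ + (d : ℂ) * z₁ * conj z₃ - (D : ℂ) * z₇ * (x : ℂ)
        - (D' : ℂ) * z₇ * (y : ℂ))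
      = -2 * m * (‖z₅‖ ^ 2 + ‖z₇‖ ^ 2) - 2 * d * transfer z₁ z₃ z₅ z₇
        - 2 * (D * x + D' * y) * (‖z₅‖ ^ 2 + ‖z₇‖ ^ 2) := by
  simp only [Complex.inner, transfer, Complex.sq_norm, Complex.normSq_apply, Complex.mul_re,
    Complex.mul_im, Complex.add_re, Complex.add_im, Complex.sub_re, Complex.sub_im,
    Complex.neg_re, Complex.neg_im, Complex.conj_re, Complex.conj_im, Complex.ofReal_re,
    Complex.ofReal_im]
  ring

end ModeEnergy

noncomputable section Coefficients

variable (ν δ : ℝ)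

def couplingA : ℝ := 1 / (δ * (1 + δ ^ 2))
def couplingB : ℝ := δ ^ 3 / (1 + δ ^ 2)
def couplingS : ℝ := (δ ^ 2 - 1) / δ
def feedbackA : ℝ := 3 * δ ^ 6 / (2 * ν * (4 + δ ^ 2) * (1 + δ ^ 2) ^ 2)
def feedbackB : ℝ := 3 * δ ^ 2 / (2 * ν * (1 + 4 * δ ^ 2) * (1 + δ ^ 2) ^ 2)
def dampingA : ℝ := δ ^ 6 * (3 + δ ^ 2) / (2 * ν * (4 + δ ^ 2) * (1 + δ ^ 2))
def dampingB : ℝ := (1 + 3 * δ ^ 2) / (2 * ν * δ ^ 2 * (1 + 4 * δ ^ 2) * (1 + δ ^ 2))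

variable {ν δ}

theorem weight_denom_pos (hδ : 1 < δ) : 0 < δ ^ 4 - 1 :=
  sub_pos.2 (one_lt_pow₀ hδ (by norm_num))

theorem weight_pos (hδ : 1 < δ) : 0 < δ ^ 4 / (δ ^ 4 - 1) :=
  div_pos (by positivity) (weight_denom_pos hδ)

theorem weight_nonneg (hδ : 1 < δ) : 0 ≤ δ ^ 4 / (δ ^ 4 - 1) := (weight_pos hδ).le

theorem mul_one_add_sq_div_sq (hδ : δ ≠ 0) : ν * (1 + δ ^ 2) / δ ^ 2 = ν + ν / δ ^ 2 := by
  field_simp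
  ring

theorem feedbackA_nonneg (hν : 0 ≤ ν) : 0 ≤ feedbackA ν δ := by unfold feedbackA; positivity
theorem dampingA_pos (hν : 0 < ν) (hδ : 0 < δ) : 0 < dampingA ν δ := by
  unfold dampingA; positivity
theorem dampingB_nonneg (hν : 0 ≤ ν) : 0 ≤ dampingB ν δ := by unfold dampingB; positivity

theorem dampingA_eq_div : dampingA ν δ = dampingA 1 δ / ν := by
  unfold dampingA; rw [div_div]; ring_nf

theorem couplingA_eq (hδ : 1 < δ) : couplingA δ = couplingS δ / (δ ^ 4 - 1) := by
  have := (weight_denom_pos hδ).ne'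
  unfold couplingA couplingS
  field_simp
  ring

theorem couplingB_eq (hδ : 1 < δ) : couplingB δ = δ ^ 4 / (δ ^ 4 - 1) * couplingS δ := by
  have := (weight_denom_pos hδ).ne'
  have : δ ≠ 0 := by positivity
  unfold couplingB couplingS
  field_simp
  ring

theorem feedbackB_le (hν : 0 < ν) (hδ : 1 < δ) :
    feedbackB ν δ ≤ δ ^ 4 / (δ ^ 4 - 1) * dampingB ν δ := by
  have h₂ : 0 < δ ^ 2 - 1 := by nlinarith
  have h₄ : δ ^ 4 - 1 = (δ ^ 2 - 1) * (δ ^ 2 + 1) := by ring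
  unfold feedbackB dampingB
  rw [h₄, div_mul_div_comm, div_le_div_iff₀ (by positivity) (by positivity)]
  have : 0 < δ ^ 2 := by positivity
  nlinarith [mul_pos (mul_pos this hν) (by positivity : 0 < (1 + 4 * δ ^ 2) * (1 + δ ^ 2) ^ 3)]

end Coefficients

structure IsSolution (ν δ : ℝ) (ω₁ ω₃ ω₅ ω₇ : ℝ → ℂ) : Prop where
  hasDerivAt₁ : ∀ t, 0 ≤ t → HasDerivAt ω₁
    (-((ν / δ ^ 2 : ℝ) : ℂ) * ω₁ t + (couplingA δ : ℂ) * (ω₃ t * ω₇ t - conj (ω₃ t) * ω₅ t)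
      + (feedbackA ν δ : ℂ) * ω₁ t * ((‖ω₅ t‖ ^ 2 + ‖ω₇ t‖ ^ 2 : ℝ) : ℂ)) t
  hasDerivAt₃ : ∀ t, 0 ≤ t → HasDerivAt ω₃
    (-(ν : ℂ) * ω₃ t + (couplingB δ : ℂ) * (conj (ω₁ t) * ω₅ t - ω₁ t * conj (ω₇ t))
      + (feedbackB ν δ : ℂ) * ω₃ t * ((‖ω₅ t‖ ^ 2 + ‖ω₇ t‖ ^ 2 : ℝ) : ℂ)) t
  hasDerivAt₅ : ∀ t, 0 ≤ t → HasDerivAt ω₅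
    (-((ν * (1 + δ ^ 2) / δ ^ 2 : ℝ) : ℂ) * ω₅ t - (couplingS δ : ℂ) * ω₁ t * ω₃ t
      - (dampingA ν δ : ℂ) * ω₅ t * ((‖ω₁ t‖ ^ 2 : ℝ) : ℂ)
      - (dampingB ν δ : ℂ) * ω₅ t * ((‖ω₃ t‖ ^ 2 : ℝ) : ℂ)) t
  hasDerivAt₇ : ∀ t, 0 ≤ t → HasDerivAt ω₇
    (-((ν * (1 + δ ^ 2) / δ ^ 2 : ℝ) : ℂ) * ω₇ t + (couplingS δ : ℂ) * ω₁ t * conj (ω₃ t)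
      - (dampingA ν δ : ℂ) * ω₇ t * ((‖ω₁ t‖ ^ 2 : ℝ) : ℂ)
      - (dampingB ν δ : ℂ) * ω₇ t * ((‖ω₃ t‖ ^ 2 : ℝ) : ℂ)) t

structure EnergyBalance (ν δ : ℝ) (a b S Z : ℝ → ℝ) : Prop where
  hasDerivAt_a : ∀ t, 0 ≤ t → HasDerivAt a
    (-2 * (ν / δ ^ 2) * a t - 2 * couplingA δ * Z t + 2 * feedbackA ν δ * a t * S t) t
  hasDerivAt_b : ∀ t, 0 ≤ t → HasDerivAt b
    (-2 * ν * b t + 2 * couplingB δ * Z t + 2 * feedbackB ν δ * b t * S t) t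
  hasDerivAt_S : ∀ t, 0 ≤ t → HasDerivAt S
    (-2 * (ν * (1 + δ ^ 2) / δ ^ 2) * S t - 2 * couplingS δ * Z t
      - 2 * (dampingA ν δ * a t + dampingB ν δ * b t) * S t) t
  a_nonneg : ∀ t, 0 ≤ a t
  b_nonneg : ∀ t, 0 ≤ b t
  S_nonneg : ∀ t, 0 ≤ S t
  sq_transfer_le : ∀ t, Z t ^ 2 ≤ 2 * a t * b t * S t

theorem IsSolution.energyBalance {ν δ : ℝ} {ω₁ ω₃ ω₅ ω₇ : ℝ → ℂ}
    (h : IsSolution ν δ ω₁ ω₃ ω₅ ω₇) :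
    EnergyBalance ν δ (‖ω₁ ·‖ ^ 2) (‖ω₃ ·‖ ^ 2) (fun t => ‖ω₅ t‖ ^ 2 + ‖ω₇ t‖ ^ 2)
      (fun t => transfer (ω₁ t) (ω₃ t) (ω₅ t) (ω₇ t)) where
  hasDerivAt_a t ht := by
    simpa only [two_inner_rhs₁] using (h.hasDerivAt₁ t ht).norm_sq
  hasDerivAt_b t ht := by
    simpa only [two_inner_rhs₃] using (h.hasDerivAt₃ t ht).norm_sq
  hasDerivAt_S t ht := by
    simpa only [two_inner_rhs₅_add_two_inner_rhs₇] using
      (h.hasDerivAt₅ t ht).norm_sq.fun_add (h.hasDerivAt₇ t ht).norm_sq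
  a_nonneg _ := by positivity
  b_nonneg _ := by positivity
  S_nonneg _ := by positivity
  sq_transfer_le t := by simpa only [mul_assoc] using sq_transfer_le (ω₁ t) (ω₃ t) (ω₅ t) (ω₇ t)

noncomputable def decayingEnergy (δ : ℝ) (b S : ℝ → ℝ) (t : ℝ) : ℝ :=
  b t + δ ^ 4 / (δ ^ 4 - 1) * S t

noncomputable def persistingEnergy (δ : ℝ) (a S : ℝ → ℝ) (t : ℝ) : ℝ :=
  a t - S t / (δ ^ 4 - 1)

namespace EnergyBalance

variable {ν δ : ℝ} {a b S Z : ℝ → ℝ}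

theorem decayingEnergy_le (h : EnergyBalance ν δ a b S Z) (hν : 0 < ν) (hδ : 1 < δ)
    {t₀ t : ℝ} (ht₀ : 0 ≤ t₀) (ht : t₀ ≤ t) :
    decayingEnergy δ b S t ≤ decayingEnergy δ b S t₀ * exp (-(2 * ν) * (t - t₀)) := by
  have hw := weight_nonneg hδ
  refine le_mul_exp_of_hasDerivAt_le_s13 ht (fun s hs => (h.hasDerivAt_b s (ht₀.trans hs.1)).fun_add
    ((h.hasDerivAt_S s (ht₀.trans hs.1)).const_mul _)) fun s _ => ?_
  have hfeedback := mul_le_mul_of_nonneg_right (feedbackB_le hν hδ)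
    (mul_nonneg (h.b_nonneg s) (h.S_nonneg s))
  have hdamping : 0 ≤ δ ^ 4 / (δ ^ 4 - 1) * dampingA ν δ * (a s * S s) :=
    mul_nonneg (mul_nonneg hw (dampingA_pos hν (by linarith)).le)
      (mul_nonneg (h.a_nonneg s) (h.S_nonneg s))
  have hrate : 0 ≤ δ ^ 4 / (δ ^ 4 - 1) * (ν / δ ^ 2) * S s :=
    mul_nonneg (mul_nonneg hw (by positivity)) (h.S_nonneg s)
  rw [decayingEnergy, couplingB_eq hδ, mul_one_add_sq_div_sq (by positivity)]
  linarith

theorem mul_exp_le_persistingEnergy (h : EnergyBalance ν δ a b S Z) (hν : 0 < ν) (hδ : 1 < δ)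
    {t₀ t : ℝ} (ht₀ : 0 ≤ t₀) (ht : t₀ ≤ t) :
    persistingEnergy δ a S t₀ * exp (-(2 * (ν / δ ^ 2)) * (t - t₀))
      ≤ persistingEnergy δ a S t := by
  have hκ : 0 ≤ (δ ^ 4 - 1)⁻¹ := inv_nonneg.2 (weight_denom_pos hδ).le
  refine mul_exp_le_of_le_hasDerivAt_s13 ht (fun s hs => (h.hasDerivAt_a s (ht₀.trans hs.1)).fun_sub
    ((h.hasDerivAt_S s (ht₀.trans hs.1)).div_const _)) fun s _ => ?_
  have hfeedback : 0 ≤ feedbackA ν δ * (a s * S s) :=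
    mul_nonneg (feedbackA_nonneg hν.le) (mul_nonneg (h.a_nonneg s) (h.S_nonneg s))
  have hdampingA : 0 ≤ (δ ^ 4 - 1)⁻¹ * dampingA ν δ * (a s * S s) :=
    mul_nonneg (mul_nonneg hκ (dampingA_pos hν (by linarith)).le)
      (mul_nonneg (h.a_nonneg s) (h.S_nonneg s))
  have hdampingB : 0 ≤ (δ ^ 4 - 1)⁻¹ * dampingB ν δ * (b s * S s) :=
    mul_nonneg (mul_nonneg hκ (dampingB_nonneg hν.le))
      (mul_nonneg (h.b_nonneg s) (h.S_nonneg s))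
  have hrate : 0 ≤ (δ ^ 4 - 1)⁻¹ * ν * S s := mul_nonneg (mul_nonneg hκ hν.le) (h.S_nonneg s)
  rw [persistingEnergy, couplingA_eq hδ, mul_one_add_sq_div_sq (by positivity)]
  simp only [div_eq_mul_inv _ (δ ^ 4 - 1)]
  linarith

theorem decayingEnergy_le_initial (h : EnergyBalance ν δ a b S Z) (hν : 0 < ν) (hδ : 1 < δ)
    {t : ℝ} (ht : 0 ≤ t) : decayingEnergy δ b S t ≤ decayingEnergy δ b S 0 := by
  have hexp : exp (-(2 * ν) * (t - 0)) ≤ 1 := exp_le_one_iff.2 (by nlinarith)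
  have hN₀ : 0 ≤ decayingEnergy δ b S 0 :=
    add_nonneg (h.b_nonneg 0) (mul_nonneg (weight_nonneg hδ) (h.S_nonneg 0))
  simpa using (h.decayingEnergy_le hν hδ le_rfl ht).trans (mul_le_of_le_one_right hN₀ hexp)

theorem le_decayingEnergy (h : EnergyBalance ν δ a b S Z) (hδ : 1 < δ) (t : ℝ) :
    b t ≤ decayingEnergy δ b S t :=
  le_add_of_nonneg_right (mul_nonneg (weight_nonneg hδ) (h.S_nonneg t))

theorem mul_le_decayingEnergy (h : EnergyBalance ν δ a b S Z) (t : ℝ) :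
    δ ^ 4 / (δ ^ 4 - 1) * S t ≤ decayingEnergy δ b S t :=
  le_add_of_nonneg_left (h.b_nonneg t)

theorem persistingEnergy_le (h : EnergyBalance ν δ a b S Z) (hδ : 1 < δ) (t : ℝ) :
    persistingEnergy δ a S t ≤ a t :=
  sub_le_self _ (div_nonneg (h.S_nonneg t) (weight_denom_pos hδ).le)

theorem le_a (h : EnergyBalance ν δ a b S Z) (hν : 0 < ν) (hν' : ν ≤ 1 / 2) (hδ : 1 < δ)
    {K t : ℝ} (ht : 0 ≤ t) (hK : ∀ s ∈ Icc 0 t, b s * S s ≤ K) :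
    a 0 * (1 - 2 * t) - 2 * couplingA δ ^ 2 * K * t ≤ a t := by
  have hderiv : ∀ s ∈ Icc 0 t, -2 * (a s + couplingA δ ^ 2 * K)
      ≤ -2 * (ν / δ ^ 2) * a s - 2 * couplingA δ * Z s + 2 * feedbackA ν δ * a s * S s := by
    intro s hs
    have hZ : 2 * |couplingA δ * Z s| ≤ a s + 2 * couplingA δ ^ 2 * (b s * S s) := by
      refine two_mul_abs_le_add_of_sq_le_mul (h.a_nonneg s)
        (by have := mul_nonneg (h.b_nonneg s) (h.S_nonneg s); positivity) ?_
      nlinarith [h.sq_transfer_le s, sq_nonneg (couplingA δ)]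
    have hrate : ν / δ ^ 2 ≤ 1 / 2 := (div_le_self hν.le (one_le_pow₀ hδ.le)).trans hν'
    have hfeedback : 0 ≤ feedbackA ν δ * (a s * S s) :=
      mul_nonneg (feedbackA_nonneg hν.le) (mul_nonneg (h.a_nonneg s) (h.S_nonneg s))
    have hbS := mul_le_mul_of_nonneg_left (hK s hs) (sq_nonneg (couplingA δ))
    have hdecay := mul_le_mul_of_nonneg_right hrate (h.a_nonneg s)
    linarith [le_abs_self (couplingA δ * Z s)]
  have hg := mul_exp_le_of_le_hasDerivAt_s13 (f := fun s => a s + couplingA δ ^ 2 * K) ht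
    (fun s hs => (h.hasDerivAt_a s hs.1).add_const _) hderiv
  have hK₀ : 0 ≤ K := (mul_nonneg (h.b_nonneg 0) (h.S_nonneg 0)).trans (hK 0 ⟨le_rfl, ht⟩)
  have hexp : 1 - 2 * t ≤ exp (-2 * (t - 0)) := by
    simpa [← neg_mul, mul_comm] using one_sub_le_exp_neg (2 * t)
  linarith [mul_le_mul_of_nonneg_left hexp
    (add_nonneg (h.a_nonneg 0) (mul_nonneg (sq_nonneg (couplingA δ)) hK₀))]

theorem S_le (h : EnergyBalance ν δ a b S Z) (hν : 0 < ν) (hδ : 0 < δ) {T α β : ℝ}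
    (hT : 0 ≤ T) (hα : 0 < α) (ha : ∀ t ∈ Icc 0 T, α ≤ a t) (hb : ∀ t ∈ Icc 0 T, b t ≤ β) :
    S T ≤ S 0 * exp (-(dampingA ν δ * α) * T)
      + 2 * couplingS δ ^ 2 * β / (dampingA ν δ ^ 2 * α) := by
  have hD := dampingA_pos hν hδ
  have hβ : 0 ≤ β := (h.b_nonneg 0).trans (hb 0 ⟨le_rfl, hT⟩)
  set c := 2 * couplingS δ ^ 2 * β / (dampingA ν δ ^ 2 * α) with hc
  have hc₀ : 0 ≤ c := by positivity
  have hderiv : ∀ s ∈ Icc 0 T,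
      -2 * (ν * (1 + δ ^ 2) / δ ^ 2) * S s - 2 * couplingS δ * Z s
        - 2 * (dampingA ν δ * a s + dampingB ν δ * b s) * S s
      ≤ -(dampingA ν δ * α) * (S s - c) := by
    intro s hs
    have hZ : 2 * |couplingS δ * Z s|
        ≤ dampingA ν δ * a s * S s + 2 * couplingS δ ^ 2 * b s / dampingA ν δ := by
      refine two_mul_abs_le_add_of_sq_le_mul
        (mul_nonneg (mul_nonneg hD.le (h.a_nonneg s)) (h.S_nonneg s))
        (div_nonneg (by have := h.b_nonneg s; positivity) hD.le) ?_
      have : dampingA ν δ * a s * S s * (2 * couplingS δ ^ 2 * b s / dampingA ν δ)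
          = couplingS δ ^ 2 * (2 * a s * b s * S s) := by field_simp
      rw [this, mul_pow]
      exact mul_le_mul_of_nonneg_left (h.sq_transfer_le s) (sq_nonneg _)
    have hcD : c * (dampingA ν δ * α) = 2 * couplingS δ ^ 2 * β / dampingA ν δ := by
      rw [hc]; field_simp
    have hbβ : 2 * couplingS δ ^ 2 * b s / dampingA ν δ
        ≤ 2 * couplingS δ ^ 2 * β / dampingA ν δ := by
      gcongr; exact hb s hs
    have haα : dampingA ν δ * α * S s ≤ dampingA ν δ * a s * S s := by
      have := ha s hs
      gcongr; exact h.S_nonneg s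
    have hrate : 0 ≤ ν * (1 + δ ^ 2) / δ ^ 2 * S s := mul_nonneg (by positivity) (h.S_nonneg s)
    have hdampingB : 0 ≤ dampingB ν δ * b s * S s :=
      mul_nonneg (mul_nonneg (dampingB_nonneg hν.le) (h.b_nonneg s)) (h.S_nonneg s)
    linarith [neg_abs_le (couplingS δ * Z s)]
  have hf := le_mul_exp_of_hasDerivAt_le_s13 (f := fun s => S s - c) hT
    (fun s hs => (h.hasDerivAt_S s hs.1).sub_const c) hderiv
  simp only [sub_zero] at hf
  linarith [mul_nonneg hc₀ (exp_nonneg (-(dampingA ν δ * α) * T))]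

theorem div_le_mul_exp (h : EnergyBalance ν δ a b S Z) (hν : 0 < ν) (hδ : 1 < δ) {T m N₀ t : ℝ}
    (hT : 0 ≤ T) (hm : 0 < m) (hN : ∀ s, 0 ≤ s → decayingEnergy δ b S s ≤ N₀)
    (ha : ∀ s ∈ Icc 0 T, m ≤ a s) (hM : m ≤ persistingEnergy δ a S T) (ht : 0 ≤ t) :
    b t / a t ≤ N₀ / m * exp (-(2 * ν * (1 - 1 / δ ^ 2)) * (t - T)) := by
  have hb : ∀ s, 0 ≤ s → b s ≤ N₀ := fun s hs => (h.le_decayingEnergy hδ s).trans (hN s hs)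
  have hN₀ : 0 ≤ N₀ := (h.b_nonneg 0).trans (hb 0 le_rfl)
  have hγ : 0 ≤ 1 - 1 / δ ^ 2 :=
    sub_nonneg.2 (div_le_one_of_le₀ (one_le_pow₀ hδ.le) (by positivity))
  rcases le_total t T with htT | hTt
  · calc b t / a t ≤ N₀ / m := div_le_div₀ hN₀ (hb t ht) hm (ha t ⟨ht, htT⟩)
      _ ≤ N₀ / m * exp (-(2 * ν * (1 - 1 / δ ^ 2)) * (t - T)) :=
        le_mul_of_one_le_right (by positivity) (one_le_exp ?_)
    linarith [mul_nonneg (mul_nonneg hν.le hγ) (sub_nonneg.2 htT)]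
  · have hbt : b t ≤ N₀ * exp (-(2 * ν) * (t - T)) :=
      (h.le_decayingEnergy hδ t).trans <| (h.decayingEnergy_le hν hδ hT hTt).trans <|
        mul_le_mul_of_nonneg_right (hN T hT) (exp_nonneg _)
    have hat : m * exp (-(2 * (ν / δ ^ 2)) * (t - T)) ≤ a t :=
      (mul_le_mul_of_nonneg_right hM (exp_nonneg _)).trans <|
        (h.mul_exp_le_persistingEnergy hν hδ hT hTt).trans (h.persistingEnergy_le hδ t)
    calc b t / a t ≤ N₀ * exp (-(2 * ν) * (t - T)) / (m * exp (-(2 * (ν / δ ^ 2)) * (t - T))) :=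
          div_le_div₀ (by positivity) hbt (by positivity) hat
      _ = N₀ / m * exp (-(2 * ν * (1 - 1 / δ ^ 2)) * (t - T)) := by
        rw [mul_div_mul_comm, ← exp_sub]; ring_nf

theorem exists_div_le_mul_exp (h : EnergyBalance ν δ a b S Z) (hν : 0 < ν) (hν' : ν ≤ 1 / 2)
    (hδ : 1 < δ) {A₀ N₀ T : ℝ} (hA₀ : 0 < A₀) (hba : b 0 ≤ a 0) (hA : a 0 + b 0 = A₀)
    (hN₀pos : 0 < N₀) (hN₀ : decayingEnergy δ b S 0 ≤ N₀) (hT : 0 < T) (hT₁ : T ≤ 1 / 4)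
    (hTK : 16 * couplingA δ ^ 2 * (N₀ * (N₀ / (δ ^ 4 / (δ ^ 4 - 1)))) * T ≤ A₀)
    (hS : S 0 * exp (-(dampingA ν δ * (A₀ / 8)) * T)
      + 2 * couplingS δ ^ 2 * N₀ / (dampingA ν δ ^ 2 * (A₀ / 8)) ≤ A₀ * (δ ^ 4 - 1) / 16) :
    ∃ M > 0, ∀ t, 0 ≤ t → b t / a t ≤ M * exp (-(2 * ν * (1 - 1 / δ ^ 2)) * t) := by
  have hw : 0 < δ ^ 4 / (δ ^ 4 - 1) := weight_pos hδ
  have hN : ∀ t, 0 ≤ t → decayingEnergy δ b S t ≤ N₀ := fun t ht =>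
    (h.decayingEnergy_le_initial hν hδ ht).trans hN₀
  have hb : ∀ t, 0 ≤ t → b t ≤ N₀ := fun t ht => (h.le_decayingEnergy hδ t).trans (hN t ht)
  have hbS : ∀ t, 0 ≤ t → b t * S t ≤ N₀ * (N₀ / (δ ^ 4 / (δ ^ 4 - 1))) := fun t ht =>
    mul_le_mul (hb t ht) ((le_div_iff₀' hw).2 ((h.mul_le_decayingEnergy t).trans (hN t ht)))
      (h.S_nonneg t) hN₀pos.le
  have ha : ∀ t ∈ Icc 0 T, A₀ / 8 ≤ a t := fun t ht => by
    have hlower := h.le_a hν hν' hδ ht.1 fun s hs => hbS s hs.1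
    have hinitial := mul_le_mul (by linarith : A₀ / 2 ≤ a 0)
      (by linarith [ht.2] : 1 / 2 ≤ 1 - 2 * t) (by norm_num) (h.a_nonneg 0)
    have htransfer := mul_le_mul_of_nonneg_left ht.2
      (by positivity : 0 ≤ couplingA δ ^ 2 * (N₀ * (N₀ / (δ ^ 4 / (δ ^ 4 - 1)))))
    linarith
  have hM : A₀ / 16 ≤ persistingEnergy δ a S T := by
    have hST := (h.S_le hν (by linarith) hT.le (by positivity) ha fun t ht => hb t ht.1).trans hS
    have : S T / (δ ^ 4 - 1) ≤ A₀ / 16 := by rw [div_le_iff₀ (weight_denom_pos hδ)]; linarith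
    rw [persistingEnergy]
    linarith [ha T ⟨hT.le, le_rfl⟩]
  refine ⟨N₀ / (A₀ / 16) * exp (2 * ν * (1 - 1 / δ ^ 2) * T), by positivity, fun t ht => ?_⟩
  calc b t / a t ≤ N₀ / (A₀ / 16) * exp (-(2 * ν * (1 - 1 / δ ^ 2)) * (t - T)) :=
        h.div_le_mul_exp hν hδ hT.le (by positivity) hN (fun s hs => by linarith [ha s hs]) hM ht
    _ = _ := by rw [mul_assoc _ (exp _), ← exp_add]; ring_nf

end EnergyBalance

theorem tendsto_slave_energy_bound {δ α T B C : ℝ} (hδ : 0 < δ) (hαT : 0 < α * T) :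
    Tendsto (fun ν => B * exp (-(dampingA ν δ * α) * T) + C / (dampingA ν δ ^ 2 * α))
      (𝓝[>] 0) (𝓝 0) := by
  have hD := dampingA_pos one_pos hδ
  have hexp : Tendsto (fun ν : ℝ => exp (-(dampingA 1 δ * α * T) * ν⁻¹)) (𝓝[>] 0) (𝓝 0) :=
    tendsto_exp_atBot.comp (tendsto_inv_nhdsGT_zero.const_mul_atTop_of_neg
      (by have := mul_pos hD hαT; linarith))
  have hsq : Tendsto (fun ν : ℝ => C / (dampingA 1 δ ^ 2 * α) * ν ^ 2) (𝓝[>] 0) (𝓝 0) := by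
    simpa using ((tendsto_id.pow 2).const_mul (C / (dampingA 1 δ ^ 2 * α))).mono_left
      (nhdsWithin_le_nhds (a := (0 : ℝ)))
  convert (hexp.const_mul B).add hsq using 2 with ν
  · rw [dampingA_eq_div]
    ring_nf
    rw [inv_inv]
    ring
  · simp

theorem exists_viscosity_threshold {δ A₀ B₀ : ℝ} (hδ : 1 < δ) (hA₀ : 0 < A₀) (hB₀ : 0 < B₀) :
    ∃ νstar > 0, ∀ ν, 0 < ν → ν ≤ νstar → ∀ a b S Z : ℝ → ℝ, EnergyBalance ν δ a b S Z →
      b 0 ≤ a 0 → a 0 + b 0 = A₀ → S 0 = B₀ →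
      ∃ M > 0, ∀ t, 0 ≤ t → b t / a t ≤ M * exp (-(2 * ν * (1 - 1 / δ ^ 2)) * t) := by
  have hδ₄ := weight_denom_pos hδ
  have hw : 0 < δ ^ 4 / (δ ^ 4 - 1) := weight_pos hδ
  -- `N₀` bounds `decayingEnergy`, hence `b ≤ N₀` and `b S ≤ K`; `T` is short enough for `le_a`
  -- to keep `a ≥ A₀ / 8` on `[0, T]`.
  set N₀ := A₀ + δ ^ 4 / (δ ^ 4 - 1) * B₀
  set K := N₀ * (N₀ / (δ ^ 4 / (δ ^ 4 - 1)))
  set T := min (1 / 4) (A₀ / (16 * couplingA δ ^ 2 * K))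
  have hq : 0 < couplingA δ := by unfold couplingA; positivity
  have hT : 0 < T := lt_min (by norm_num) (by positivity)
  have hTK : 16 * couplingA δ ^ 2 * K * T ≤ A₀ :=
    (le_div_iff₀' (by positivity)).1 (min_le_right _ _)
  have hev : ∀ᶠ ν in 𝓝[>] 0, ν ≤ 1 / 2 ∧ B₀ * exp (-(dampingA ν δ * (A₀ / 8)) * T)
      + 2 * couplingS δ ^ 2 * N₀ / (dampingA ν δ ^ 2 * (A₀ / 8)) ≤ A₀ * (δ ^ 4 - 1) / 16 :=
    (eventually_nhdsWithin_of_eventually_nhds (eventually_le_nhds (by norm_num))).and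
      ((tendsto_slave_energy_bound (by linarith) (by positivity)).eventually
        (ge_mem_nhds (by positivity)))
  obtain ⟨νstar, hνstar, hsmall⟩ := mem_nhdsGT_iff_exists_Ioc_subset.1 hev
  refine ⟨νstar, hνstar, fun ν hν hνle a b S Z h hba hA hB => ?_⟩
  obtain ⟨hν', hST⟩ := hsmall ⟨hν, hνle⟩
  refine h.exists_div_le_mul_exp hν hν' hδ hA₀ hba hA (by positivity) ?_ hT (min_le_left _ _)
    hTK (by rwa [hB])
  rw [decayingEnergy, hB]
  linarith [h.a_nonneg 0]

end CenterManifold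

/-- Selection of the x-bar state for δ > 1. There exists η₀ > 0 such that for
any fixed η ∈ (0,η₀), δ ∈ (1,√(3/2)) with |δ²−1| < η, and initial values A0, B0 > 0, there
exist U* > 0 and ν* > 0 such that for all 0 < ν ≤ ν*, every solution of the asymmetric
center-manifold system with the given initial energies, ω1(t) ≠ 0 for all t ≥ 0, and
U(0) ≤ U*, satisfies U(t) ≤ M₂ e^{−γt} for some M₂ > 0 and all t ≥ 0, where
U(t) = |ω3(t)|²/|ω1(t)|² and γ = 2ν(1 − 1/δ²) > 0; in particular U(t) → 0 as t → ∞. -/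
theorem xbar_selection :
    ∃ η0 > (0 : ℝ), ∀ η : ℝ, 0 < η → η < η0 →
      ∀ δ : ℝ, 1 < δ → δ < Real.sqrt (3 / 2) → |δ ^ 2 - 1| < η →
        ∀ A0 B0 : ℝ, 0 < A0 → 0 < B0 →
          ∃ Ustar > (0 : ℝ), ∃ νstar > (0 : ℝ),
            ∀ ν : ℝ, 0 < ν → ν ≤ νstar →
              ∀ ω1 ω3 ω5 ω7 : ℝ → ℂ,
                ( ∀ t : ℝ, 0 ≤ t → HasDerivAt ω1
                  (-((ν / δ ^ 2 : ℝ) : ℂ) * ω1 t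
                    + ((1 / (δ * (1 + δ ^ 2)) : ℝ) : ℂ) * (ω3 t * ω7 t - (starRingEnd ℂ) (ω3 t) * ω5 t)
                    + ((3 * δ ^ 6 / (2 * ν * (4 + δ ^ 2) * (1 + δ ^ 2) ^ 2) : ℝ) : ℂ) * ω1 t
                        * ((‖ω5 t‖ ^ 2 + ‖ω7 t‖ ^ 2 : ℝ) : ℂ)) t) →
                ( ∀ t : ℝ, 0 ≤ t → HasDerivAt ω3
                  (-(ν : ℂ) * ω3 t
                    + ((δ ^ 3 / (1 + δ ^ 2) : ℝ) : ℂ) * ((starRingEnd ℂ) (ω1 t) * ω5 t - ω1 t * (starRingEnd ℂ) (ω7 t))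
                    + ((3 * δ ^ 2 / (2 * ν * (1 + 4 * δ ^ 2) * (1 + δ ^ 2) ^ 2) : ℝ) : ℂ) * ω3 t
                        * ((‖ω5 t‖ ^ 2 + ‖ω7 t‖ ^ 2 : ℝ) : ℂ)) t) →
                ( ∀ t : ℝ, 0 ≤ t → HasDerivAt ω5
                  (-((ν * (1 + δ ^ 2) / δ ^ 2 : ℝ) : ℂ) * ω5 t
                    - (((δ ^ 2 - 1) / δ : ℝ) : ℂ) * ω1 t * ω3 t
                    - ((δ ^ 6 * (3 + δ ^ 2) / (2 * ν * (4 + δ ^ 2) * (1 + δ ^ 2)) : ℝ) : ℂ) * ω5 t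
                        * ((‖ω1 t‖ ^ 2 : ℝ) : ℂ)
                    - (((1 + 3 * δ ^ 2) / (2 * ν * δ ^ 2 * (1 + 4 * δ ^ 2) * (1 + δ ^ 2)) : ℝ) : ℂ) * ω5 t
                        * ((‖ω3 t‖ ^ 2 : ℝ) : ℂ)) t) →
                ( ∀ t : ℝ, 0 ≤ t → HasDerivAt ω7
                  (-((ν * (1 + δ ^ 2) / δ ^ 2 : ℝ) : ℂ) * ω7 t
                    + (((δ ^ 2 - 1) / δ : ℝ) : ℂ) * ω1 t * (starRingEnd ℂ) (ω3 t)
                    - ((δ ^ 6 * (3 + δ ^ 2) / (2 * ν * (4 + δ ^ 2) * (1 + δ ^ 2)) : ℝ) : ℂ) * ω7 t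
                        * ((‖ω1 t‖ ^ 2 : ℝ) : ℂ)
                    - (((1 + 3 * δ ^ 2) / (2 * ν * δ ^ 2 * (1 + 4 * δ ^ 2) * (1 + δ ^ 2)) : ℝ) : ℂ) * ω7 t
                        * ((‖ω3 t‖ ^ 2 : ℝ) : ℂ)) t) →
                ‖ω1 0‖ ^ 2 + ‖ω3 0‖ ^ 2 = A0 →
                ‖ω5 0‖ ^ 2 + ‖ω7 0‖ ^ 2 = B0 →
                (∀ t : ℝ, 0 ≤ t → ω1 t ≠ 0) →
                ‖ω3 0‖ ^ 2 / ‖ω1 0‖ ^ 2 ≤ Ustar →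
                ∃ M2 > (0 : ℝ),
                  (∀ t : ℝ, 0 ≤ t →
                    ‖ω3 t‖ ^ 2 / ‖ω1 t‖ ^ 2
                      ≤ M2 * Real.exp (-(2 * ν * (1 - 1 / δ ^ 2)) * t))
                  ∧ Filter.Tendsto
                      (fun t => ‖ω3 t‖ ^ 2 / ‖ω1 t‖ ^ 2)
                      Filter.atTop (nhds 0) := by
  refine ⟨1, one_pos, fun η _ _ δ hδ _ _ A0 B0 hA0 hB0 => ?_⟩
  obtain ⟨νstar, hνstar, hselect⟩ := CenterManifold.exists_viscosity_threshold hδ hA0 hB0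
  refine ⟨1, one_pos, νstar, hνstar,
    fun ν hν hνle ω1 ω3 ω5 ω7 h1 h3 h5 h7 hA hB hne hU => ?_⟩
  have hsol : CenterManifold.IsSolution ν δ ω1 ω3 ω5 ω7 := ⟨h1, h3, h5, h7⟩
  have hba : ‖ω3 0‖ ^ 2 ≤ ‖ω1 0‖ ^ 2 :=
    (div_le_one (pow_pos (norm_pos_iff.2 (hne 0 le_rfl)) 2)).1 hU
  obtain ⟨M, hM, hdecay⟩ := hselect ν hν hνle _ _ _ _ hsol.energyBalance hba hA hB
  have hγ : 0 < 2 * ν * (1 - 1 / δ ^ 2) :=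
    mul_pos (by positivity)
      (sub_pos.2 ((div_lt_one (by positivity)).2 (one_lt_pow₀ hδ two_ne_zero)))
  exact ⟨M, hM, hdecay, tendsto_zero_of_le_mul_exp hγ (fun t => by positivity) hdecay⟩
end

section
/- Perturbative selection of the x-bar state (ε₀ = +1): with the notation below and ε₀ = 1, the critical time τ₊ = (Y₀/ε + Y₁)/(ν₀ K) is positive and of order O(1/ε) as ε → 0, the function Ȳ satisfies Ȳ(τ₊) = 0 and Ȳ(τ) > 0 for 0 ≤ τ < τ₊, and the ratio X̄(τ)/Ȳ(τ) tends to +∞ as τ → τ₊ from the left. -/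
open Filter

/-- Perturbative selection of the x-bar state (ε₀ = +1). With
K = 20X₀Y₀/(X₀+Y₀), X̄(τ) = X₀e^{−2ν₀τ} + ε[X₁e^{−2ν₀τ} + ν₀τe^{−2ν₀τ}(4X₀+K)] and
Ȳ(τ) = Y₀e^{−2ν₀τ} + ε[Y₁e^{−2ν₀τ} − ν₀Kτe^{−2ν₀τ}], the critical time
τ₊ = (Y₀/ε + Y₁)/(ν₀K) is positive and of order O(1/ε) (indeed ε·τ₊ = (Y₀+εY₁)/(ν₀K)),
Ȳ(τ₊) = 0 with Ȳ > 0 on [0,τ₊), and X̄/Ȳ → +∞ as τ → τ₊ from the left. -/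
theorem xbar_perturbative_selection
    (ν0 ε X0 Y0 X1 Y1 : ℝ) (hν0 : 0 < ν0) (hε : 0 < ε)
    (hX0 : 0 < X0) (hY0 : 0 < Y0) (hX1 : 0 ≤ X1) (hY1 : 0 ≤ Y1) :
    let K : ℝ := 20 * X0 * Y0 / (X0 + Y0)
    let Xbar : ℝ → ℝ := fun τ =>
      X0 * Real.exp (-2 * ν0 * τ)
        + ε * (X1 * Real.exp (-2 * ν0 * τ) + ν0 * τ * Real.exp (-2 * ν0 * τ) * (4 * X0 + K))
    let Ybar : ℝ → ℝ := fun τ =>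
      Y0 * Real.exp (-2 * ν0 * τ)
        + ε * (Y1 * Real.exp (-2 * ν0 * τ) - ν0 * K * τ * Real.exp (-2 * ν0 * τ))
    let τplus : ℝ := (Y0 / ε + Y1) / (ν0 * K)
    0 < τplus
      ∧ ε * τplus = (Y0 + ε * Y1) / (ν0 * K)
      ∧ Ybar τplus = 0
      ∧ (∀ τ : ℝ, 0 ≤ τ → τ < τplus → 0 < Ybar τ)
      ∧ Filter.Tendsto (fun τ => Xbar τ / Ybar τ) (nhdsWithin τplus (Set.Iio τplus))
          Filter.atTop := by
  intro K Xbar Ybar τplus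
  have hK : 0 < K := div_pos (by positivity) (by positivity)
  have hνK : 0 < ν0 * K := mul_pos hν0 hK
  have hτ : 0 < τplus := div_pos (by positivity) hνK
  set f : ℝ → ℝ := fun τ => X0 + ε * X1 + ε * ν0 * τ * (4 * X0 + K) with hf
  set g : ℝ → ℝ := fun τ => Y0 + ε * Y1 - ε * ν0 * K * τ with hg
  have hXf : ∀ τ, Xbar τ = Real.exp (-2 * ν0 * τ) * f τ := by
    intro τ; simp only [Xbar, f]; ring
  have hYg : ∀ τ, Ybar τ = Real.exp (-2 * ν0 * τ) * g τ := by
    intro τ; simp only [Ybar, g]; ring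
  have hgτ : g τplus = 0 := by
    simp only [g, τplus]
    field_simp
    ring
  have hglt : ∀ τ, τ < τplus → 0 < g τ := by
    intro τ hτlt
    have : g τ = g τplus + ε * ν0 * K * (τplus - τ) := by simp only [g]; ring
    rw [this, hgτ, zero_add]
    have : 0 < τplus - τ := by linarith
    positivity
  refine ⟨hτ, ?_, ?_, ?_, ?_⟩
  · simp only [τplus]; field_simp
  · rw [hYg, hgτ, mul_zero]
  · intro τ _ hτlt
    rw [hYg]
    exact mul_pos (Real.exp_pos _) (hglt τ hτlt)
  · have heq : ∀ τ, Xbar τ / Ybar τ = f τ * (g τ)⁻¹ := by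
      intro τ
      rw [hXf, hYg, mul_div_mul_left _ _ (ne_of_gt (Real.exp_pos _)), div_eq_mul_inv]
    simp only [heq]
    have hgc : Tendsto g (nhdsWithin τplus (Set.Iio τplus)) (nhdsWithin 0 (Set.Ioi 0)) := by
      apply tendsto_nhdsWithin_of_tendsto_nhds_of_eventually_within
      · have : Continuous g := by continuity
        simpa [hgτ] using (this.tendsto τplus).mono_left nhdsWithin_le_nhds
      · filter_upwards [self_mem_nhdsWithin] with τ hτlt
        exact hglt τ hτlt
    have hginv : Tendsto (fun τ => (g τ)⁻¹) (nhdsWithin τplus (Set.Iio τplus)) atTop :=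
      tendsto_inv_nhdsGT_zero.comp hgc
    have hfc : Tendsto f (nhdsWithin τplus (Set.Iio τplus)) (nhds (f τplus)) := by
      have : Continuous f := by continuity
      exact (this.tendsto τplus).mono_left nhdsWithin_le_nhds
    have hfpos : 0 < f τplus := by
      simp only [f]; positivity
    exact hfc.pos_mul_atTop hfpos hginv
end

section
/- Perturbative selection of the y-bar state (ε₀ = −1): with the notation below and ε₀ = −1, the critical time τ₋ = (X₀/ε + X₁)/(ν₀ (K + 4X₀)) is positive and of order O(1/ε) as ε → 0, the function X̄ satisfies X̄(τ₋) = 0 and X̄(τ) > 0 for 0 ≤ τ < τ₋, the function Ȳ is strictly positive on [0, τ₋], and the ratio X̄(τ)/Ȳ(τ) tends to 0 as τ → τ₋. -/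
open Filter

/-- Perturbative selection of the y-bar state (ε₀ = −1). With
K = 20X₀Y₀/(X₀+Y₀), X̄(τ) = X₀e^{−2ν₀τ} + ε[X₁e^{−2ν₀τ} − ν₀τe^{−2ν₀τ}(4X₀+K)] and
Ȳ(τ) = Y₀e^{−2ν₀τ} + ε[Y₁e^{−2ν₀τ} + ν₀Kτe^{−2ν₀τ}], the critical time
τ₋ = (X₀/ε + X₁)/(ν₀(K+4X₀)) is positive and of order O(1/ε)
(indeed ε·τ₋ = (X₀+εX₁)/(ν₀(K+4X₀))), X̄(τ₋) = 0 with X̄ > 0 on [0,τ₋), Ȳ > 0 on [0,τ₋],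
and X̄/Ȳ → 0 as τ → τ₋. -/
theorem ybar_perturbative_selection
    (ν0 ε X0 Y0 X1 Y1 : ℝ) (hν0 : 0 < ν0) (hε : 0 < ε)
    (hX0 : 0 < X0) (hY0 : 0 < Y0) (hX1 : 0 ≤ X1) (hY1 : 0 ≤ Y1) :
    let K : ℝ := 20 * X0 * Y0 / (X0 + Y0)
    let Xbar : ℝ → ℝ := fun τ =>
      X0 * Real.exp (-2 * ν0 * τ)
        + ε * (X1 * Real.exp (-2 * ν0 * τ) - ν0 * τ * Real.exp (-2 * ν0 * τ) * (4 * X0 + K))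
    let Ybar : ℝ → ℝ := fun τ =>
      Y0 * Real.exp (-2 * ν0 * τ)
        + ε * (Y1 * Real.exp (-2 * ν0 * τ) + ν0 * K * τ * Real.exp (-2 * ν0 * τ))
    let τminus : ℝ := (X0 / ε + X1) / (ν0 * (K + 4 * X0))
    0 < τminus
      ∧ ε * τminus = (X0 + ε * X1) / (ν0 * (K + 4 * X0))
      ∧ Xbar τminus = 0
      ∧ (∀ τ : ℝ, 0 ≤ τ → τ < τminus → 0 < Xbar τ)
      ∧ (∀ τ : ℝ, 0 ≤ τ → τ ≤ τminus → 0 < Ybar τ)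
      ∧ Filter.Tendsto (fun τ => Xbar τ / Ybar τ) (nhdsWithin τminus (Set.Iio τminus))
          (nhds 0) := by
  intro K Xbar Ybar τminus
  have hK : 0 < K := by
    have : 0 < X0 + Y0 := by linarith
    exact div_pos (by positivity) this
  have hden : 0 < ν0 * (K + 4 * X0) := by positivity
  have hτ : 0 < τminus := div_pos (by positivity) hden
  have hkey : ε * (ν0 * (4 * X0 + K)) * τminus = X0 + ε * X1 := by
    show ε * (ν0 * (4 * X0 + K)) * ((X0 / ε + X1) / (ν0 * (K + 4 * X0))) = X0 + ε * X1
    field_simp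
    ring
  have hXform : ∀ τ : ℝ, Xbar τ =
      Real.exp (-2 * ν0 * τ) * (X0 + ε * X1 - ε * (ν0 * (4 * X0 + K)) * τ) := by
    intro τ; show _ = _; ring
  have hXτ : Xbar τminus = 0 := by
    rw [hXform, hkey]; ring
  have hYpos : ∀ τ : ℝ, 0 ≤ τ → τ ≤ τminus → 0 < Ybar τ := by
    intro τ hτ0 _
    have he := Real.exp_pos (-2 * ν0 * τ)
    have h1 : 0 ≤ ν0 * K * τ * Real.exp (-2 * ν0 * τ) := by positivity
    have h2 : 0 ≤ Y1 * Real.exp (-2 * ν0 * τ) := by positivity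
    have h3 : 0 < Y0 * Real.exp (-2 * ν0 * τ) := by positivity
    show 0 < Y0 * Real.exp (-2 * ν0 * τ) + ε * (Y1 * Real.exp (-2 * ν0 * τ) + ν0 * K * τ * Real.exp (-2 * ν0 * τ))
    nlinarith
  refine ⟨hτ, ?_, hXτ, ?_, hYpos, ?_⟩
  · show ε * ((X0 / ε + X1) / (ν0 * (K + 4 * X0))) = _
    field_simp
  · intro τ hτ0 hτlt
    rw [hXform]
    have he := Real.exp_pos (-2 * ν0 * τ)
    have hc : 0 < ε * (ν0 * (4 * X0 + K)) := by positivity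
    have : ε * (ν0 * (4 * X0 + K)) * τ < X0 + ε * X1 := by
      rw [← hkey]; exact (mul_lt_mul_iff_right₀ hc).2 hτlt
    nlinarith
  · have hYne : Ybar τminus ≠ 0 := (hYpos τminus hτ.le le_rfl).ne'
    have hcX : Continuous Xbar := by fun_prop
    have hcY : Continuous Ybar := by fun_prop
    have hca : ContinuousAt (fun τ => Xbar τ / Ybar τ) τminus :=
      (hcX.continuousAt).div (hcY.continuousAt) hYne
    have : Filter.Tendsto (fun τ => Xbar τ / Ybar τ) (nhdsWithin τminus (Set.Iio τminus)) (nhds (Xbar τminus / Ybar τminus)) := hca.tendsto.mono_left nhdsWithin_le_nhds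
    simpa [hXτ] using this
end

section
/- Resonant growth in the first-order slow-time expansion: with the notation below, the functions Ω₁₁(τ) = c e^{−ν₀τ} + ν₀ ε₀ τ e^{−ν₀τ} ( 2a + 10|b|² a / D ) and Ω₃₁(τ) = d e^{−ν₀τ} − ν₀ ε₀ τ e^{−ν₀τ} (10 |a|² b / D) are, for any c, d ∈ ℂ, solutions of the linear forced ODEs Ω₁₁' = −ν₀ Ω₁₁ + (1/2)(Ω₃₀ Ω₇₁ − conj(Ω₃₀) Ω₅₁) + 2ν₀ ε₀ Ω₁₀ and Ω₃₁' = −ν₀ Ω₃₁ + (1/2)(conj(Ω₁₀) Ω₅₁ − Ω₁₀ conj(Ω₇₁)) with Ω₁₁(0) = c and Ω₃₁(0) = d. -/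
/-! The forcing terms of both equations are multiples of the free mode `e^{−ν₀τ}`, so the equations
are resonant and `(c + μτ) e^{−ν₀τ}` solves `Ω' = −ν₀ Ω + μ e^{−ν₀τ}`. It remains to compute `μ`:
since `e^{−ν₀τ}` is real, the forcing reduces to an algebraic expression in `a`, `b` and their
conjugates, and `b b̄ = |b|²`, `ā a = |a|²` turn it into the stated coefficients. -/

open Complex ComplexConjugate

theorem hasDerivAt_exp_mul_ofReal (l : ℂ) (τ : ℝ) :
    HasDerivAt (fun t : ℝ => exp (l * t)) (l * exp (l * τ)) τ := by
  simpa [mul_comm] using (((hasDerivAt_id τ).ofReal_comp).const_mul l).cexp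

theorem hasDerivAt_secular (l c μ : ℂ) (τ : ℝ) :
    HasDerivAt (fun t : ℝ => c * exp (l * t) + μ * t * exp (l * t))
      (l * (c * exp (l * τ) + μ * τ * exp (l * τ)) + μ * exp (l * τ)) τ := by
  have hexp := hasDerivAt_exp_mul_ofReal l τ
  have hid : HasDerivAt (fun t : ℝ => (t : ℂ)) 1 τ := (hasDerivAt_id τ).ofReal_comp
  exact ((hexp.const_mul c).add ((hid.const_mul μ).mul hexp)).congr_deriv (by ring)

theorem conj_exp_ofReal_mul_ofReal (x y : ℝ) : conj (exp (x * y)) = exp (x * y) := by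
  rw [← exp_conj, map_mul, conj_ofReal, conj_ofReal]

theorem resonant_growth_expansion_general
    (ν0 ε0 : ℝ)
    (a b : ℂ) (c d : ℂ) :
    let D : ℝ := ‖a‖ ^ 2 + ‖b‖ ^ 2
    let Ω10 : ℝ → ℂ := fun τ => a * Complex.exp (-(ν0 : ℂ) * (τ : ℂ))
    let Ω30 : ℝ → ℂ := fun τ => b * Complex.exp (-(ν0 : ℂ) * (τ : ℂ))
    let Ω51 : ℂ := -10 * (ν0 : ℂ) * (ε0 : ℂ) * a * b / (D : ℂ)
    let Ω71 : ℂ := 10 * (ν0 : ℂ) * (ε0 : ℂ) * a * (starRingEnd ℂ) b / (D : ℂ)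
    let Ω11 : ℝ → ℂ := fun τ =>
      c * Complex.exp (-(ν0 : ℂ) * (τ : ℂ))
        + (ν0 : ℂ) * (ε0 : ℂ) * (τ : ℂ) * Complex.exp (-(ν0 : ℂ) * (τ : ℂ))
            * (2 * a + 10 * ((‖b‖ ^ 2 : ℝ) : ℂ) * a / (D : ℂ))
    let Ω31 : ℝ → ℂ := fun τ =>
      d * Complex.exp (-(ν0 : ℂ) * (τ : ℂ))
        - (ν0 : ℂ) * (ε0 : ℂ) * (τ : ℂ) * Complex.exp (-(ν0 : ℂ) * (τ : ℂ))
            * (10 * ((‖a‖ ^ 2 : ℝ) : ℂ) * b / (D : ℂ))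
    (∀ τ : ℝ, HasDerivAt Ω11
        (-(ν0 : ℂ) * Ω11 τ
          + (1 / 2 : ℂ) * (Ω30 τ * Ω71 - (starRingEnd ℂ) (Ω30 τ) * Ω51)
          + 2 * (ν0 : ℂ) * (ε0 : ℂ) * Ω10 τ) τ)
      ∧ (∀ τ : ℝ, HasDerivAt Ω31
          (-(ν0 : ℂ) * Ω31 τ
            + (1 / 2 : ℂ) * ((starRingEnd ℂ) (Ω10 τ) * Ω51 - Ω10 τ * (starRingEnd ℂ) Ω71)) τ)
      ∧ Ω11 0 = c ∧ Ω31 0 = d := by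
  intro D Ω10 Ω30 Ω51 Ω71 Ω11 Ω31
  have hconj (τ : ℝ) : conj (exp (-(ν0 : ℂ) * τ)) = exp (-(ν0 : ℂ) * τ) := by
    simpa using conj_exp_ofReal_mul_ofReal (-ν0) τ
  refine ⟨fun τ => ?_, fun τ => ?_, by simp [Ω11], by simp [Ω31]⟩
  · convert hasDerivAt_secular (-ν0) c (ν0 * ε0 * (2 * a + 10 * ((‖b‖ ^ 2 : ℝ) : ℂ) * a / D)) τ
      using 1
    · funext t; ring
    · simp only [Ω11, Ω30, Ω71, Ω51, Ω10, map_mul, hconj, ofReal_pow, ← mul_conj']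
      ring
  · convert hasDerivAt_secular (-ν0) d (-(ν0 * ε0 * (10 * ((‖a‖ ^ 2 : ℝ) : ℂ) * b / D))) τ
      using 1
    · funext t; ring
    · simp only [Ω31, Ω10, Ω71, Ω51, map_mul, map_div₀, map_ofNat, conj_ofReal, conj_conj, hconj,
        ofReal_pow, ← conj_mul']
      ring

/-- Resonant growth in the first-order slow-time expansion. With
Ω₁₀(τ) = a e^{−ν₀τ}, Ω₃₀(τ) = b e^{−ν₀τ}, D = |a|² + |b|²,
Ω₅₁ = −10ν₀ε₀ab/D and Ω₇₁ = 10ν₀ε₀a·conj(b)/D, the functions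
Ω₁₁(τ) = c e^{−ν₀τ} + ν₀ε₀τe^{−ν₀τ}(2a + 10|b|²a/D) and
Ω₃₁(τ) = d e^{−ν₀τ} − ν₀ε₀τe^{−ν₀τ}(10|a|²b/D) solve, for any c, d ∈ ℂ, the forced ODEs
Ω₁₁' = −ν₀Ω₁₁ + (1/2)(Ω₃₀Ω₇₁ − conj(Ω₃₀)Ω₅₁) + 2ν₀ε₀Ω₁₀ and
Ω₃₁' = −ν₀Ω₃₁ + (1/2)(conj(Ω₁₀)Ω₅₁ − Ω₁₀conj(Ω₇₁)), with Ω₁₁(0) = c and Ω₃₁(0) = d. -/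
theorem resonant_growth_expansion
    (ν0 ε0 : ℝ) (hν0 : 0 < ν0) (hε0 : ε0 = 1 ∨ ε0 = -1)
    (a b : ℂ) (hab : ¬(a = 0 ∧ b = 0)) (c d : ℂ) :
    let D : ℝ := ‖a‖ ^ 2 + ‖b‖ ^ 2
    let Ω10 : ℝ → ℂ := fun τ => a * Complex.exp (-(ν0 : ℂ) * (τ : ℂ))
    let Ω30 : ℝ → ℂ := fun τ => b * Complex.exp (-(ν0 : ℂ) * (τ : ℂ))
    let Ω51 : ℂ := -10 * (ν0 : ℂ) * (ε0 : ℂ) * a * b / (D : ℂ)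
    let Ω71 : ℂ := 10 * (ν0 : ℂ) * (ε0 : ℂ) * a * (starRingEnd ℂ) b / (D : ℂ)
    let Ω11 : ℝ → ℂ := fun τ =>
      c * Complex.exp (-(ν0 : ℂ) * (τ : ℂ))
        + (ν0 : ℂ) * (ε0 : ℂ) * (τ : ℂ) * Complex.exp (-(ν0 : ℂ) * (τ : ℂ))
            * (2 * a + 10 * ((‖b‖ ^ 2 : ℝ) : ℂ) * a / (D : ℂ))
    let Ω31 : ℝ → ℂ := fun τ =>
      d * Complex.exp (-(ν0 : ℂ) * (τ : ℂ))
        - (ν0 : ℂ) * (ε0 : ℂ) * (τ : ℂ) * Complex.exp (-(ν0 : ℂ) * (τ : ℂ))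
            * (10 * ((‖a‖ ^ 2 : ℝ) : ℂ) * b / (D : ℂ))
    (∀ τ : ℝ, HasDerivAt Ω11
        (-(ν0 : ℂ) * Ω11 τ
          + (1 / 2 : ℂ) * (Ω30 τ * Ω71 - (starRingEnd ℂ) (Ω30 τ) * Ω51)
          + 2 * (ν0 : ℂ) * (ε0 : ℂ) * Ω10 τ) τ)
      ∧ (∀ τ : ℝ, HasDerivAt Ω31
          (-(ν0 : ℂ) * Ω31 τ
            + (1 / 2 : ℂ) * ((starRingEnd ℂ) (Ω10 τ) * Ω51 - Ω10 τ * (starRingEnd ℂ) Ω71)) τ)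
      ∧ Ω11 0 = c ∧ Ω31 0 = d :=
  resonant_growth_expansion_general ν0 ε0 a b c d
end
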